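/- arXiv:2112.12963 — 6 statements merged into one kernel-verified Lean document; each statement's English description precedes it below -/
import Mathlib

section
/- For every Young diagram Y contained in the rectangular Young diagram Y_{m,n}, the sequence d(Y) = (d_{-m}(Y), …, d_n(Y)) belongs to D_{m,n}, and the map d : F(Y_{m,n}) → D_{m,n}, Y ↦ d(Y), is a bijection. -/
open Finset

/-- The rectangular Young diagram `Y_{m,n}` (boxes are 1-based pairs `(i,j)`). -/
def rect (m n : ℕ) : Finset (ℕ × ℕ) := Finset.Icc 1 m ×ˢ Finset.Icc 1 n

/-- `Y` is a Young diagram: a finite set of 1-based boxes, downward closed. -/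
def IsYD (Y : Finset (ℕ × ℕ)) : Prop :=
  (∀ p ∈ Y, 1 ≤ p.1 ∧ 1 ≤ p.2) ∧
  (∀ p ∈ Y, ∀ q : ℕ × ℕ, 1 ≤ q.1 → 1 ≤ q.2 → q.1 ≤ p.1 → q.2 ≤ p.2 → q ∈ Y)

/-- `d_k(Y)`: the number of boxes of `Y` on the `k`-th diagonal `j - i = k`. -/
def dk (Y : Finset (ℕ × ℕ)) (k : ℤ) : ℤ :=
  ((Y.filter fun p => (p.2 : ℤ) - (p.1 : ℤ) = k).card : ℤ)

/-- The set `D_{m,n}` of diagonal sequences: non-negative, vanishing outside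
`(-m, n)`, and satisfying the adjacency condition. -/
def Dseq (m n : ℕ) (a : ℤ → ℤ) : Prop :=
  (∀ k : ℤ, 0 ≤ a k) ∧
  (∀ k : ℤ, k ≤ -(m : ℤ) → a k = 0) ∧
  (∀ k : ℤ, (n : ℤ) ≤ k → a k = 0) ∧
  (∀ i : ℤ, -(m : ℤ) < i → i ≤ 0 → a (i - 1) ≤ a i ∧ a i ≤ a (i - 1) + 1) ∧
  (∀ i : ℤ, 0 < i → i ≤ (n : ℤ) → a i ≤ a (i - 1) ∧ a (i - 1) ≤ a i + 1)

/-- `a_{[l,r]}`: subtract `1` from the components indexed by `l ≤ k ≤ r`. -/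
def cut (a : ℤ → ℤ) (l r : ℤ) : ℤ → ℤ := fun k => if l ≤ k ∧ k ≤ r then a k - 1 else a k

/-- The pair `(x,y)` sitting at positions `(k-1,k)` satisfies the adjacency condition. -/
def adjPair (k x y : ℤ) : Prop := if k ≤ 0 then x ≤ y ∧ y ≤ x + 1 else y ≤ x ∧ x ≤ y + 1

/-- `(a_{k-1}, a_k)` is a left bulge, `a_{k-1} ↘ a_k`. -/
def leftBulge (a : ℤ → ℤ) (k : ℤ) : Prop :=
  adjPair k (a (k - 1)) (a k) ∧ adjPair k (a (k - 1) - 1) (a k)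

/-- `(a_{k-1}, a_k)` is a right bulge, `a_{k-1} ↗ a_k`. -/
def rightBulge (a : ℤ → ℤ) (k : ℤ) : Prop :=
  adjPair k (a (k - 1)) (a k) ∧ adjPair k (a (k - 1)) (a k - 1)

/-- The map `E` duplicating the `c`-th component of a sequence. -/
def Emap (c : ℤ) (a : ℤ → ℤ) : ℤ → ℤ := fun k => if k ≤ c then a k else a (k - 1)

def el (c k : ℤ) : ℤ := if k ≤ c then k else k + 1

def er (c k : ℤ) : ℤ := if k < c then k else k + 1

/-- The unimodal numbering `α_{m,n}(i,j) = min (j-i+m) (i-j+n)`. -/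
def unimodal (m n : ℕ) (p : ℕ × ℕ) : ℤ :=
  min ((p.2 : ℤ) - (p.1 : ℤ) + m) ((p.1 : ℤ) - (p.2 : ℤ) + n)

/-- `A(X)`: the multiset of unimodal numbers of the boxes of `X`. -/
def Amul (m n : ℕ) (X : Finset (ℕ × ℕ)) : Multiset ℤ := X.val.map (unimodal m n)

/-- The hook of the box `(i,j)` in `Y`. -/
def hook (Y : Finset (ℕ × ℕ)) (i j : ℕ) : Finset (ℕ × ℕ) :=
  Y.filter fun p => (p.1 = i ∧ j ≤ p.2) ∨ (p.2 = j ∧ i ≤ p.1)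

/-- After removing the hook of `(i,j)`, boxes strictly south-east of `(i,j)` move
up-left by one step. -/
def shiftBox (i j : ℕ) (p : ℕ × ℕ) : ℕ × ℕ :=
  if i < p.1 ∧ j < p.2 then (p.1 - 1, p.2 - 1) else p

/-- The Young diagram `Y ∖ h_Y(i,j)` obtained by removing the hook of `(i,j)`. -/
def removeHook (Y : Finset (ℕ × ℕ)) (i j : ℕ) : Finset (ℕ × ℕ) :=
  (Y \ hook Y i j).image (shiftBox i j)

/-- One move of MHRG(m,n): remove a hook; if the resulting diagram has a hook with
the same multiset of unimodal numbers, one such hook must also be removed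
(this second removal happens at most once). -/
def Move (m n : ℕ) (Y Y' : Finset (ℕ × ℕ)) : Prop :=
  ∃ i j : ℕ, (i, j) ∈ Y ∧
    ((Y' = removeHook Y i j ∧
        ¬∃ i' j' : ℕ, (i', j') ∈ removeHook Y i j ∧
          Amul m n (hook (removeHook Y i j) i' j') = Amul m n (hook Y i j)) ∨
      (∃ i' j' : ℕ, (i', j') ∈ removeHook Y i j ∧
        Amul m n (hook (removeHook Y i j) i' j') = Amul m n (hook Y i j) ∧
        Y' = removeHook (removeHook Y i j) i' j'))

/-- `T(Y_{m,n})`: the positions of MHRG(m,n) reachable from the starting position. -/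
def Reach (m n : ℕ) (Y : Finset (ℕ × ℕ)) : Prop :=
  Relation.ReflTransGen (Move m n) (rect m n) Y

/-- `O(Y)`: the set of options of a position `Y` in MHRG(m,n). -/
def Opt (m n : ℕ) (Y : Finset (ℕ × ℕ)) : Set (Finset (ℕ × ℕ)) := {Y' | Move m n Y Y'}

lemma card_removeHook_lt (Y : Finset (ℕ × ℕ)) (i j : ℕ) (h : (i, j) ∈ Y) :
    (removeHook Y i j).card < Y.card := by
  have hsub : hook Y i j ⊆ Y := Finset.filter_subset _ _
  have hmem : (i, j) ∈ hook Y i j :=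
    Finset.mem_filter.mpr ⟨h, Or.inl ⟨rfl, le_rfl⟩⟩
  have h1 : (removeHook Y i j).card ≤ (Y \ hook Y i j).card := Finset.card_image_le
  have h2 : (Y \ hook Y i j).card = Y.card - (hook Y i j).card := by
    rw [Finset.card_sdiff, Finset.inter_eq_left.mpr hsub]
  have h3 : 0 < (hook Y i j).card := Finset.card_pos.mpr ⟨_, hmem⟩
  have h4 : (hook Y i j).card ≤ Y.card := Finset.card_le_card hsub
  omega

lemma move_card_lt {m n : ℕ} {Y Y' : Finset (ℕ × ℕ)} (h : Move m n Y Y') :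
    Y'.card < Y.card := by
  obtain ⟨i, j, hij, hc⟩ := h
  rcases hc with ⟨rfl, -⟩ | ⟨i', j', hij', -, rfl⟩
  · exact card_removeHook_lt Y i j hij
  · exact (card_removeHook_lt _ i' j' hij').trans (card_removeHook_lt Y i j hij)

/-- The minimal excludant. -/
noncomputable def mex (s : Set ℕ) : ℕ := sInf {k | k ∉ s}

/-- The Grundy value of a position of MHRG(m,n). -/
noncomputable def grundy (m n : ℕ) (Y : Finset (ℕ × ℕ)) : ℕ :=
  mex {g : ℕ | ∃ Y', ∃ _ : Move m n Y Y', grundy m n Y' = g}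
termination_by Y.card
decreasing_by exact move_card_lt (by assumption)

/-- The two-row Young diagram `(λ₁, λ₂)`. -/
def tworow (a b : ℕ) : Finset (ℕ × ℕ) :=
  ({1} : Finset ℕ) ×ˢ Finset.Icc 1 a ∪ ({2} : Finset ℕ) ×ˢ Finset.Icc 1 b

/-- `S` is a shifted Young diagram: rows are intervals `[i, λ_i]` with `λ` strictly
decreasing. -/
def IsShifted (S : Finset (ℕ × ℕ)) : Prop :=
  (∀ p ∈ S, 1 ≤ p.1 ∧ p.1 ≤ p.2) ∧
  (∀ p ∈ S, ∀ j' : ℕ, p.1 ≤ j' → j' ≤ p.2 → (p.1, j') ∈ S) ∧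
  (∀ p ∈ S, 2 ≤ p.1 → (p.1 - 1, p.2 + 1) ∈ S)

/-- The shifted Young diagram of a (strictly decreasing, positive) list of row lengths. -/
def shiftedOf (l : List ℕ) : Finset (ℕ × ℕ) :=
  (Finset.range l.length).biUnion fun i =>
    ({i + 1} : Finset ℕ) ×ˢ Finset.Icc (i + 1) (l.getD i 0)

/-- The staircase `S_n = (n, n-1, …, 1)`. -/
def staircase (n : ℕ) : List ℕ := (List.range n).map fun i => n - i

/-- The shifted hook of the box `(i,j)` in `S` (box, arm, leg and tail). -/
def shook (S : Finset (ℕ × ℕ)) (i j : ℕ) : Finset (ℕ × ℕ) :=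
  S.filter fun p => (p.1 = i ∧ j ≤ p.2) ∨ (p.2 = j ∧ i ≤ p.1) ∨ (p.1 = j + 1 ∧ j < p.2)

/-- The shifting of boxes performed after removing the shifted hook of `(i,j)`. -/
def sShiftBox (i j : ℕ) (p : ℕ × ℕ) : ℕ × ℕ :=
  if i < p.1 ∧ p.1 < j + 1 ∧ j < p.2 then (p.1 - 1, p.2 - 1)
  else if j + 1 < p.1 then (p.1 - 2, p.2 - 2)
  else p

/-- The shifted Young diagram obtained by removing the shifted hook of `(i,j)`. -/
def sRemoveHook (S : Finset (ℕ × ℕ)) (i j : ℕ) : Finset (ℕ × ℕ) :=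
  (S \ shook S i j).image (sShiftBox i j)

/-- One move of HRG on shifted Young diagrams: remove one hook. -/
def SMove (S S' : Finset (ℕ × ℕ)) : Prop :=
  ∃ i j : ℕ, (i, j) ∈ S ∧ S' = sRemoveHook S i j

lemma card_sRemoveHook_lt (S : Finset (ℕ × ℕ)) (i j : ℕ) (h : (i, j) ∈ S) :
    (sRemoveHook S i j).card < S.card := by
  have hsub : shook S i j ⊆ S := Finset.filter_subset _ _
  have hmem : (i, j) ∈ shook S i j :=
    Finset.mem_filter.mpr ⟨h, Or.inl ⟨rfl, le_rfl⟩⟩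
  have h1 : (sRemoveHook S i j).card ≤ (S \ shook S i j).card := Finset.card_image_le
  have h2 : (S \ shook S i j).card = S.card - (shook S i j).card := by
    rw [Finset.card_sdiff, Finset.inter_eq_left.mpr hsub]
  have h3 : 0 < (shook S i j).card := Finset.card_pos.mpr ⟨_, hmem⟩
  have h4 : (shook S i j).card ≤ S.card := Finset.card_le_card hsub
  omega

lemma smove_card_lt {S S' : Finset (ℕ × ℕ)} (h : SMove S S') : S'.card < S.card := by
  obtain ⟨i, j, hij, rfl⟩ := h
  exact card_sRemoveHook_lt S i j hij

/-- The Grundy value of a position of HRG on shifted Young diagrams. -/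
noncomputable def sgrundy (S : Finset (ℕ × ℕ)) : ℕ :=
  mex {g : ℕ | ∃ S', ∃ _ : SMove S S', sgrundy S' = g}
termination_by S.card
decreasing_by exact smove_card_lt (by assumption)

/-- `OH(Y)` for a two-row diagram `Y = (λ₁,λ₂)`: the results of single hook removals. -/
def OH (l1 l2 : ℕ) : Set (Finset (ℕ × ℕ)) :=
  {Y | ∃ a : ℕ, l2 ≤ a ∧ a < l1 ∧ Y = tworow a l2} ∪
  {Y | ∃ b : ℕ, b < l2 ∧ Y = tworow l1 b} ∪
  {Y | ∃ a : ℕ, a < l2 ∧ Y = tworow (l2 - 1) a}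

/-! A box `(i, j)` lies on the diagonal `k = j - i` at distance `min i j` from its start, and
in a Young diagram the boxes of each diagonal form an initial segment of it. Hence
`(i, j) ∈ Y ↔ min i j ≤ d_{j-i}(Y)`, so `Y` is recovered from `d(Y)`. A sequence `a` arises
this way exactly when the set `{(i, j) | min i j ≤ a (j - i)}` is closed under unit steps
towards the origin, and for the four kinds of unit steps this closure is precisely the
adjacency condition; the support condition on `a` confines that set to `Y_{m,n}`. -/

/-- `InDiagram a p`: the box `p` belongs to the diagram whose `k`-th diagonal has length `a k`. -/
def InDiagram (a : ℤ → ℤ) (p : ℕ × ℕ) : Prop := ((min p.1 p.2 : ℕ) : ℤ) ≤ a ((p.2 : ℤ) - p.1)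

instance (a : ℤ → ℤ) : DecidablePred (InDiagram a) := fun _ => Int.decLe _ _

/-- The `t`-th box of the `k`-th diagonal (the `0`-th one lies on an axis). -/
def diagBox (k : ℤ) (t : ℕ) : ℕ × ℕ := (t + (-k).toNat, t + k.toNat)

/-- The adjacency condition of `D_{m,n}`, imposed at every index. -/
def DiagAdjacent (a : ℤ → ℤ) : Prop :=
  (∀ k ≤ 0, a (k - 1) ≤ a k ∧ a k ≤ a (k - 1) + 1) ∧
  (∀ k, 0 < k → a k ≤ a (k - 1) ∧ a (k - 1) ≤ a k + 1)

/-- The inverse of `d` on `D_{m,n}`. -/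
def ofDiag (m n : ℕ) (a : ℤ → ℤ) : Finset (ℕ × ℕ) := (rect m n).filter (InDiagram a)

section Diagonal

variable {a : ℤ → ℤ} {k : ℤ} {t : ℕ}

lemma diagBox_sub (k : ℤ) (t : ℕ) : ((diagBox k t).2 : ℤ) - (diagBox k t).1 = k := by
  simp only [diagBox]; omega

lemma min_diagBox (k : ℤ) (t : ℕ) : min (diagBox k t).1 (diagBox k t).2 = t := by
  simp only [diagBox]; omega

lemma diagBox_min (p : ℕ × ℕ) : diagBox ((p.2 : ℤ) - p.1) (min p.1 p.2) = p := by
  ext <;> simp only [diagBox] <;> omega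

lemma one_le_diagBox (ht : 1 ≤ t) : 1 ≤ (diagBox k t).1 ∧ 1 ≤ (diagBox k t).2 := by
  simp only [diagBox]; omega

lemma diagBox_mono (k : ℤ) : Monotone (diagBox k) := fun s t h => by
  simp only [diagBox, Prod.mk_le_mk]; omega

lemma diagBox_injective (k : ℤ) : Function.Injective (diagBox k) := fun s t h => by
  simpa [diagBox] using congrArg Prod.fst h

lemma inDiagram_diagBox : InDiagram a (diagBox k t) ↔ (t : ℤ) ≤ a k := by
  rw [InDiagram, diagBox_sub, min_diagBox]

end Diagonal

section Adjacency

variable {a : ℤ → ℤ}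

lemma antitone_inDiagram_of_diagAdjacent (ha : DiagAdjacent a) : Antitone (InDiagram a) := by
  refine antitone_prod_iff.2 ⟨fun i => antitone_nat_of_succ_le fun j h => ?_,
    fun j => antitone_nat_of_succ_le fun i h => ?_⟩
  · have e : ((j + 1 : ℕ) : ℤ) - i = (j - i) + 1 := by push_cast; ring
    simp only [InDiagram, e] at h ⊢
    have hl := ha.1 ((j : ℤ) - i + 1)
    have hr := ha.2 ((j : ℤ) - i + 1)
    simp only [add_sub_cancel_right] at hl hr
    omega
  · have e : (j : ℤ) - ((i + 1 : ℕ) : ℤ) = (j - i) - 1 := by push_cast; ring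
    simp only [InDiagram, e] at h ⊢
    have hl := ha.1 ((j : ℤ) - i)
    have hr := ha.2 ((j : ℤ) - i)
    omega

lemma diagAdjacent_of_antitone_inDiagram (h0 : ∀ k, 0 ≤ a k) (ha : Antitone (InDiagram a)) :
    DiagAdjacent a := by
  have step {k k' : ℤ} {s t : ℕ} (h : diagBox k' s ≤ diagBox k t) :
      (t : ℤ) ≤ a k → (s : ℤ) ≤ a k' := fun ht =>
    inDiagram_diagBox.1 (ha h (inDiagram_diagBox.2 ht))
  have box_le {k k' : ℤ} {s t : ℕ} (h1 : s + (-k').toNat ≤ t + (-k).toNat)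
      (h2 : s + k'.toNat ≤ t + k.toNat) : diagBox k' s ≤ diagBox k t := ⟨h1, h2⟩
  -- each inequality compares the last box of one diagonal with a box of the neighbouring
  -- diagonal that it dominates; the `toNat` witnesses spare a case split on signs
  refine ⟨fun k hk => ⟨?_, ?_⟩, fun k hk => ⟨?_, ?_⟩⟩
  · have := step (k := k - 1) (k' := k) (s := (a (k - 1)).toNat) (t := (a (k - 1)).toNat)
      (box_le (by omega) (by omega))
    have := h0 (k - 1)
    omega
  · have := step (k := k) (k' := k - 1) (s := (a k - 1).toNat) (t := (a k - 1).toNat + 1)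
      (box_le (by omega) (by omega))
    have := h0 (k - 1)
    omega
  · have := step (k := k) (k' := k - 1) (s := (a k).toNat) (t := (a k).toNat)
      (box_le (by omega) (by omega))
    have := h0 k
    omega
  · have := step (k := k - 1) (k' := k) (s := (a (k - 1) - 1).toNat)
      (t := (a (k - 1) - 1).toNat + 1) (box_le (by omega) (by omega))
    have := h0 k
    omega

end Adjacency

lemma dseq_iff {m n : ℕ} {a : ℤ → ℤ} :
    Dseq m n a ↔ (∀ k, 0 ≤ a k) ∧ (∀ k ≤ -(m : ℤ), a k = 0) ∧ (∀ k, (n : ℤ) ≤ k → a k = 0) ∧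
      Antitone (InDiagram a) := by
  constructor
  · rintro ⟨h0, hl, hr, hal, har⟩
    refine ⟨h0, hl, hr, antitone_inDiagram_of_diagAdjacent ⟨fun k hk => ?_, fun k hk => ?_⟩⟩
    · rcases lt_or_ge (-(m : ℤ)) k with hkm | hkm
      · exact hal k hkm hk
      · rw [hl k hkm, hl (k - 1) (by omega)]; omega
    · rcases le_or_gt k n with hkn | hkn
      · exact har k hk hkn
      · rw [hr k hkn.le, hr (k - 1) (by omega)]; omega
  · rintro ⟨h0, hl, hr, ha⟩
    have hadj := diagAdjacent_of_antitone_inDiagram h0 ha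
    exact ⟨h0, hl, hr, fun k _ hk => hadj.1 k hk, fun k hk _ => hadj.2 k hk⟩

section YoungDiagram

variable {Y : Finset (ℕ × ℕ)}

lemma min_le_dk_of_mem (hY : IsYD Y) {p : ℕ × ℕ} (hp : p ∈ Y) :
    ((min p.1 p.2 : ℕ) : ℤ) ≤ dk Y ((p.2 : ℤ) - p.1) := by
  set k : ℤ := (p.2 : ℤ) - p.1
  have hmaps : Set.MapsTo (diagBox k) (Icc 1 (min p.1 p.2) : Set ℕ)
      (Y.filter fun q => (q.2 : ℤ) - q.1 = k) := by
    intro t ht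
    rw [coe_Icc, Set.mem_Icc] at ht
    have hle : diagBox k t ≤ p := diagBox_min p ▸ diagBox_mono k ht.2
    obtain ⟨h1, h2⟩ := one_le_diagBox (k := k) ht.1
    exact mem_filter.2 ⟨hY.2 p hp _ h1 h2 hle.1 hle.2, diagBox_sub k t⟩
  have := card_le_card_of_injOn _ hmaps (diagBox_injective k).injOn
  rw [Nat.card_Icc, Nat.add_sub_cancel] at this
  exact Nat.cast_le.2 this

lemma mem_of_min_le_dk (hY : IsYD Y) {p : ℕ × ℕ} (hp1 : 1 ≤ p.1) (hp2 : 1 ≤ p.2)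
    (h : ((min p.1 p.2 : ℕ) : ℤ) ≤ dk Y ((p.2 : ℤ) - p.1)) : p ∈ Y := by
  by_contra hpY
  set k : ℤ := (p.2 : ℤ) - p.1
  set diag := Y.filter fun q => (q.2 : ℤ) - q.1 = k
  -- a box of the diagonal at distance `≥ min p.1 p.2` would lie south-east of `p`
  have hmaps : Set.MapsTo (fun q : ℕ × ℕ => min q.1 q.2) diag (Ico 1 (min p.1 p.2)) := by
    intro q hq
    obtain ⟨hqY, hqk⟩ := mem_filter.1 hq
    obtain ⟨hq1, hq2⟩ := hY.1 q hqY
    refine mem_Ico.2 ⟨le_min hq1 hq2, lt_of_not_ge fun hle => hpY ?_⟩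
    have hpq : p ≤ q := by
      rw [← diagBox_min p, ← diagBox_min q, hqk]
      exact diagBox_mono k hle
    exact hY.2 q hqY p hp1 hp2 hpq.1 hpq.2
  have hinj : Set.InjOn (fun q : ℕ × ℕ => min q.1 q.2) diag := by
    intro q hq q' hq' he
    rw [← diagBox_min q, ← diagBox_min q', (mem_filter.1 hq).2, (mem_filter.1 hq').2]
    exact congrArg (diagBox k) he
  have := card_le_card_of_injOn _ hmaps hinj
  rw [Nat.card_Ico] at this
  change ((diag.card : ℕ) : ℤ) ≥ _ at h
  omega

lemma mem_iff_inDiagram (hY : IsYD Y) {p : ℕ × ℕ} (hp1 : 1 ≤ p.1) (hp2 : 1 ≤ p.2) :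
    p ∈ Y ↔ InDiagram (dk Y) p :=
  ⟨min_le_dk_of_mem hY, mem_of_min_le_dk hY hp1 hp2⟩

lemma antitone_inDiagram_dk (hY : IsYD Y) : Antitone (InDiagram (dk Y)) := by
  intro p q hpq hq
  by_cases hp : 1 ≤ p.1 ∧ 1 ≤ p.2
  · have hqY := (mem_iff_inDiagram hY (hp.1.trans hpq.1) (hp.2.trans hpq.2)).2 hq
    exact (mem_iff_inDiagram hY hp.1 hp.2).1 (hY.2 q hqY p hp.1 hp.2 hpq.1 hpq.2)
  · have : min p.1 p.2 = 0 := by omega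
    simp only [InDiagram, this, Nat.cast_zero]
    exact Int.natCast_nonneg _

lemma dk_eq_zero {m n : ℕ} (hs : Y ⊆ rect m n) {k : ℤ} (hk : k ≤ -(m : ℤ) ∨ (n : ℤ) ≤ k) :
    dk Y k = 0 := by
  rw [dk, Nat.cast_eq_zero, card_eq_zero, filter_eq_empty_iff]
  intro p hp
  have := mem_product.1 (hs hp)
  simp only [mem_Icc] at this
  omega

lemma dseq_dk {m n : ℕ} (hY : IsYD Y) (hs : Y ⊆ rect m n) : Dseq m n (dk Y) :=
  dseq_iff.2 ⟨fun _ => Int.natCast_nonneg _, fun _ hk => dk_eq_zero hs (.inl hk),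
    fun _ hk => dk_eq_zero hs (.inr hk), antitone_inDiagram_dk hY⟩

lemma ofDiag_dk {m n : ℕ} (hY : IsYD Y) (hs : Y ⊆ rect m n) : ofDiag m n (dk Y) = Y := by
  ext p
  rw [ofDiag, mem_filter]
  constructor
  · rintro ⟨hp, hin⟩
    have := mem_product.1 hp
    simp only [mem_Icc] at this
    exact (mem_iff_inDiagram hY this.1.1 this.2.1).2 hin
  · intro hp
    exact ⟨hs hp, (mem_iff_inDiagram hY (hY.1 p hp).1 (hY.1 p hp).2).1 hp⟩

end YoungDiagram

section Inverse

variable {m n : ℕ} {a : ℤ → ℤ}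

lemma mem_rect_of_inDiagram (ha : Dseq m n a) {p : ℕ × ℕ} (hp1 : 1 ≤ p.1) (hp2 : 1 ≤ p.2)
    (hp : InDiagram a p) : p ∈ rect m n := by
  obtain ⟨-, hl, hr, hanti⟩ := dseq_iff.1 ha
  have outside {k : ℤ} (hk : a k = 0) : ¬diagBox k 1 ≤ p := fun hle => by
    have := inDiagram_diagBox.1 (hanti hle hp)
    omega
  have hm : ¬diagBox (-(m : ℤ)) 1 ≤ p := outside (hl _ le_rfl)
  have hn : ¬diagBox n 1 ≤ p := outside (hr _ le_rfl)
  simp only [diagBox, Prod.le_def] at hm hn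
  simp only [rect, mem_product, mem_Icc]
  omega

lemma isYD_ofDiag (ha : Dseq m n a) : IsYD (ofDiag m n a) := by
  have hanti := (dseq_iff.1 ha).2.2.2
  refine ⟨fun p hp => ?_, fun p hp q hq1 hq2 hqp1 hqp2 => ?_⟩
  · have := mem_product.1 (mem_filter.1 hp).1
    simp only [mem_Icc] at this
    exact ⟨this.1.1, this.2.1⟩
  · have hq := hanti (show q ≤ p from ⟨hqp1, hqp2⟩) (mem_filter.1 hp).2
    exact mem_filter.2 ⟨mem_rect_of_inDiagram ha hq1 hq2 hq, hq⟩

lemma eq_of_inDiagram_iff {b : ℤ → ℤ} (ha : ∀ k, 0 ≤ a k) (hb : ∀ k, 0 ≤ b k)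
    (h : ∀ p : ℕ × ℕ, 1 ≤ p.1 → 1 ≤ p.2 → (InDiagram a p ↔ InDiagram b p)) : a = b := by
  funext k
  have key (t : ℕ) (ht : 1 ≤ t) : (t : ℤ) ≤ a k ↔ (t : ℤ) ≤ b k := by
    simpa only [inDiagram_diagBox] using h (diagBox k t) (one_le_diagBox ht).1 (one_le_diagBox ht).2
  have ha' := key (a k).toNat
  have hb' := key (b k).toNat
  have := ha k
  have := hb k
  omega

lemma dk_ofDiag (ha : Dseq m n a) : dk (ofDiag m n a) = a := by
  refine eq_of_inDiagram_iff (fun _ => Int.natCast_nonneg _) ha.1 fun p hp1 hp2 => ?_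
  rw [← mem_iff_inDiagram (isYD_ofDiag ha) hp1 hp2, ofDiag, mem_filter]
  exact ⟨And.right, fun hp => ⟨mem_rect_of_inDiagram ha hp1 hp2 hp, hp⟩⟩

end Inverse

theorem stmt0_general (m n : ℕ) :
    (∀ Y : Finset (ℕ × ℕ), IsYD Y → Y ⊆ rect m n → Dseq m n (dk Y)) ∧
    Set.BijOn dk {Y : Finset (ℕ × ℕ) | IsYD Y ∧ Y ⊆ rect m n} {a : ℤ → ℤ | Dseq m n a} :=
  ⟨fun _ hY hs => dseq_dk hY hs,
    Set.InvOn.bijOn (f' := ofDiag m n)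
      ⟨fun _ hY => ofDiag_dk hY.1 hY.2, fun _ ha => dk_ofDiag ha⟩
      (fun _ hY => dseq_dk hY.1 hY.2)
      (fun _ ha => ⟨isYD_ofDiag ha, filter_subset _ _⟩)⟩

theorem stmt0 (m n : ℕ) (hm : 1 ≤ m) (hn : 1 ≤ n) :
    (∀ Y : Finset (ℕ × ℕ), IsYD Y → Y ⊆ rect m n → Dseq m n (dk Y)) ∧
    Set.BijOn dk {Y : Finset (ℕ × ℕ) | IsYD Y ∧ Y ⊆ rect m n} {a : ℤ → ℤ | Dseq m n a} :=
  stmt0_general m n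
end

section
/- Let Y be a Young diagram contained in Y_{m,n}, let (i,j) ∈ Y, and set Y' = Y∖h_Y(i,j). Let −m < l ≤ r < n be such that d(Y') = d(Y)_{[l,r]}. Assume there exists a box (i',j') ∈ Y' with A(h_{Y'}(i',j')) = A(h_Y(i,j)) as multisets, and set Y'' = Y'∖h_{Y'}(i',j'). Then d(Y'') = d(Y')_{[n−m−r, n−m−l]}. Moreover, there exists no box (i'',j'') ∈ Y'' such that A(h_{Y''}(i'',j'')) = A(h_Y(i,j)). -/
open Finset

/-!
Removing the hook of a box lowers by one exactly the diagonals of an interval `[L, R]`, each met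
once by the hook, so `A` of the hook is the image of `[L, R]` under `k ↦ min (k + m) (n - k)`.
The length and the minimum of that image determine `[L, R]` up to the reflection
`k ↦ n - m - k`, so every later hook with the same multiset as the first cuts `[l, r]` or its
reflection. Diagonal sequences of Young diagrams satisfy the adjacency condition, and a cut by
`[l, r]` preserves it only at a right bulge at `l` and a left bulge at `r + 1`. The cut destroys
the bulge at `l`; only a cut ending at `l - 1` restores it, and that one leaves the bulge at
`r + 1` destroyed. So `[l, r]` can be cut neither twice in a row nor again after one more cut.
-/

/-- The adjacency condition of `Dseq`, at every index: every Young diagram satisfies it, whether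
or not it lies in `Y_{m,n}`. -/
def AdjacencyCond (a : ℤ → ℤ) : Prop := ∀ k, adjPair k (a (k - 1)) (a k)

lemma rightBulge_iff {a : ℤ → ℤ} {k : ℤ} :
    rightBulge a k ↔ a k = a (k - 1) + if k ≤ 0 then 1 else 0 := by
  unfold rightBulge adjPair
  split_ifs <;> omega

lemma leftBulge_iff {a : ℤ → ℤ} {k : ℤ} :
    leftBulge a k ↔ a (k - 1) = a k + if k ≤ 0 then 0 else 1 := by
  unfold leftBulge adjPair
  split_ifs <;> omega

lemma cut_inj {a : ℤ → ℤ} {l r L R : ℤ} (hlr : l ≤ r) (hLR : L ≤ R)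
    (h : cut a l r = cut a L R) : l = L ∧ r = R := by
  have hl := congrFun h l
  have hr := congrFun h r
  have hL := congrFun h L
  have hR := congrFun h R
  simp only [cut] at hl hr hL hR
  split_ifs at hl hr hL hR <;> omega

section Bulges

variable {a : ℤ → ℤ} {l r : ℤ}

lemma AdjacencyCond.rightBulge_of_cut (ha : AdjacencyCond a) (hc : AdjacencyCond (cut a l r))
    (hlr : l ≤ r) : rightBulge a l := by
  refine ⟨ha l, ?_⟩
  have := hc l
  simp only [cut] at this
  rwa [if_neg (by omega), if_pos ⟨le_rfl, hlr⟩] at this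

lemma AdjacencyCond.leftBulge_of_cut (ha : AdjacencyCond a) (hc : AdjacencyCond (cut a l r))
    (hlr : l ≤ r) : leftBulge a (r + 1) := by
  refine ⟨ha (r + 1), ?_⟩
  have := hc (r + 1)
  simp only [cut, add_sub_cancel_right] at this ⊢
  rwa [if_pos ⟨hlr, le_rfl⟩, if_neg (by omega)] at this

lemma AdjacencyCond.not_cut_cut (ha : AdjacencyCond a) (hc : AdjacencyCond (cut a l r))
    (hlr : l ≤ r) : ¬AdjacencyCond (cut (cut a l r) l r) := fun hcc => by
  have h₁ := rightBulge_iff.1 (ha.rightBulge_of_cut hc hlr)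
  have h₂ := rightBulge_iff.1 (hc.rightBulge_of_cut hcc hlr)
  simp only [cut] at h₂
  split_ifs at h₁ h₂ <;> omega

lemma AdjacencyCond.not_cut_cut_cut {L R : ℤ} (ha : AdjacencyCond a)
    (hc : AdjacencyCond (cut a l r)) (hb : AdjacencyCond (cut (cut a l r) L R)) (hlr : l ≤ r) :
    ¬AdjacencyCond (cut (cut (cut a l r) L R) l r) := fun hbc => by
  have h₁ := rightBulge_iff.1 (ha.rightBulge_of_cut hc hlr)
  have h₂ := rightBulge_iff.1 (hb.rightBulge_of_cut hbc hlr)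
  have h₃ := leftBulge_iff.1 (ha.leftBulge_of_cut hc hlr)
  have h₄ := leftBulge_iff.1 (hb.leftBulge_of_cut hbc hlr)
  have hR : R = l - 1 := by
    simp only [cut] at h₂
    split_ifs at h₁ h₂ <;> omega
  simp only [cut, add_sub_cancel_right] at h₃ h₄
  split_ifs at h₃ h₄ <;> omega

end Bulges

def hookValue (m n : ℕ) (k : ℤ) : ℤ := min (k + m) (n - k)

lemma min_le_min_of_image_hookValue_subset {m n : ℕ} {L R l r : ℤ} (hLR : L ≤ R)
    (h : (Icc L R).image (hookValue m n) ⊆ (Icc l r).image (hookValue m n)) :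
    min (l + m) (n - r) ≤ min (L + m) (n - R) := by
  obtain ⟨k, hk, hkv⟩ : ∃ k ∈ Icc L R, hookValue m n k = min (L + m) (n - R) := by
    rcases le_total (L + m) (n - R) with h' | h'
    · exact ⟨L, by simp [hLR], by simp only [hookValue]; omega⟩
    · exact ⟨R, by simp [hLR], by simp only [hookValue]; omega⟩
  obtain ⟨k', hk', hk'v⟩ := mem_image.1 (h (mem_image_of_mem _ hk))
  simp only [mem_Icc, hookValue] at hk hk' hkv hk'v
  omega

lemma Icc_eq_or_reflect_of_map_hookValue_eq {m n : ℕ} {L R l r : ℤ} (hLR : L ≤ R)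
    (hlr : l ≤ r) (h : (Icc L R).val.map (hookValue m n) = (Icc l r).val.map (hookValue m n)) :
    (L = l ∧ R = r) ∨ (L = n - m - r ∧ R = n - m - l) := by
  have hcard := congrArg Multiset.card h
  simp only [Multiset.card_map, card_val, Int.card_Icc] at hcard
  have himg : (Icc L R).image (hookValue m n) = (Icc l r).image (hookValue m n) := by
    simp only [Finset.image, h]
  have h₁ := min_le_min_of_image_hookValue_subset hLR himg.le
  have h₂ := min_le_min_of_image_hookValue_subset hlr himg.ge
  omega

def content (b : ℕ × ℕ) : ℤ := (b.2 : ℤ) - b.1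

lemma dk_eq_card_filter_content (Z : Finset (ℕ × ℕ)) (k : ℤ) :
    dk Z k = ((Z.filter fun b => content b = k).card : ℤ) := rfl

lemma unimodal_eq_hookValue_content (m n : ℕ) (b : ℕ × ℕ) :
    unimodal m n b = hookValue m n (content b) := by
  simp only [unimodal, hookValue, content]
  omega

lemma content_shiftBox (i j : ℕ) (b : ℕ × ℕ) : content (shiftBox i j b) = content b := by
  unfold shiftBox content
  split_ifs <;> omega

lemma shiftBox_injOn (Z : Finset (ℕ × ℕ)) (i j : ℕ) :
    Set.InjOn (shiftBox i j) ↑(Z \ hook Z i j) := by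
  rintro ⟨a, b⟩ hx ⟨c, d⟩ hy h
  simp only [coe_sdiff, Set.mem_sdiff, mem_coe, hook, mem_filter, not_and] at hx hy
  have hx' := hx.2 hx.1
  have hy' := hy.2 hy.1
  simp only [shiftBox] at h
  split_ifs at h <;> simp only [Prod.mk.injEq] at h ⊢ <;> omega

lemma mem_removeHook {Z : Finset (ℕ × ℕ)} {i j p q : ℕ} :
    (p, q) ∈ removeHook Z i j ↔
      if i ≤ p ∧ j ≤ q then (p + 1, q + 1) ∈ Z else (p, q) ∈ Z := by
  simp only [removeHook, mem_image, mem_sdiff, hook, mem_filter, shiftBox, Prod.exists]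
  constructor
  · rintro ⟨a, b, ⟨hab, hhook⟩, heq⟩
    split_ifs at heq with hshift <;> simp only [Prod.mk.injEq] at heq <;>
      obtain ⟨rfl, rfl⟩ := heq
    · rwa [if_pos (by omega), Nat.sub_add_cancel (by omega), Nat.sub_add_cancel (by omega)]
    · rwa [if_neg fun hse => hhook ⟨hab, by omega⟩]
  · intro h
    split_ifs at h with hse
    · exact ⟨p + 1, q + 1, ⟨h, by omega⟩, by rw [if_pos (by omega)]; rfl⟩
    · exact ⟨p, q, ⟨h, by omega⟩, by rw [if_neg (by omega)]⟩

lemma isYD_removeHook {Z : Finset (ℕ × ℕ)} (hZ : IsYD Z) {i j : ℕ} (hij : (i, j) ∈ Z) :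
    IsYD (removeHook Z i j) := by
  have hi := hZ.1 _ hij
  refine ⟨fun ⟨p, q⟩ h => ?_, fun ⟨p, q⟩ h ⟨p', q'⟩ hp' hq' hpp' hqq' => ?_⟩
  · rw [mem_removeHook] at h
    split_ifs at h with hse
    · dsimp only; omega
    · exact hZ.1 _ h
  · dsimp only at *
    rw [mem_removeHook] at h ⊢
    split_ifs at h ⊢ with h₁ h₂ h₂
    · exact hZ.2 _ h (p' + 1, q' + 1) (by omega) (by omega) (by simpa) (by simpa)
    · omega
    · exact hZ.2 _ h (p', q') hp' hq' (by dsimp only; omega) (by dsimp only; omega)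
    · exact hZ.2 _ h (p', q') hp' hq' hpp' hqq'

lemma dk_le_dk_add_card {Z : Finset (ℕ × ℕ)} {k k' : ℤ} (f : ℕ × ℕ → ℕ × ℕ)
    (s : Finset (ℕ × ℕ)) (hf : Set.InjOn f Z)
    (hmaps : ∀ b ∈ Z, content b = k → (f b ∈ Z ∧ content (f b) = k') ∨ f b ∈ s) :
    dk Z k ≤ dk Z k' + s.card := by
  simp only [dk_eq_card_filter_content]
  norm_cast
  calc _ ≤ ((Z.filter fun b => content b = k') ∪ s).card := by
        refine card_le_card_of_injOn f (fun b hb => ?_) (hf.mono (filter_subset _ _))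
        rw [mem_coe, mem_filter] at hb
        simpa only [mem_coe, mem_union, mem_filter] using hmaps b hb.1 hb.2
    _ ≤ _ := card_union_le _ _

/-- In a Young diagram, the last column of row `p` (`0` for an empty row). -/
def rowLen (Z : Finset (ℕ × ℕ)) (p : ℕ) : ℕ := (Z.filter fun b => b.1 = p).sup Prod.snd

def colLen (Z : Finset (ℕ × ℕ)) (q : ℕ) : ℕ := (Z.filter fun b => b.2 = q).sup Prod.fst

section YoungDiagram

variable {Z : Finset (ℕ × ℕ)} {i j : ℕ} {l r : ℤ}

lemma IsYD.mem_iff_le_rowLen (hZ : IsYD Z) {p q : ℕ} :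
    (p, q) ∈ Z ↔ 1 ≤ p ∧ 1 ≤ q ∧ q ≤ rowLen Z p := by
  refine ⟨fun h => ⟨(hZ.1 _ h).1, (hZ.1 _ h).2, ?_⟩, fun ⟨hp, hq, hle⟩ => ?_⟩
  · exact le_sup (f := Prod.snd) (mem_filter.2 ⟨h, (rfl : (p, q).1 = p)⟩)
  obtain ⟨b, hb, hqb⟩ := (Finset.le_sup_iff hq).1 hle
  rw [mem_filter] at hb
  exact hZ.2 b hb.1 (p, q) hp hq hb.2.ge hqb

lemma IsYD.mem_iff_le_colLen (hZ : IsYD Z) {p q : ℕ} :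
    (p, q) ∈ Z ↔ 1 ≤ p ∧ 1 ≤ q ∧ p ≤ colLen Z q := by
  refine ⟨fun h => ⟨(hZ.1 _ h).1, (hZ.1 _ h).2, ?_⟩, fun ⟨hp, hq, hle⟩ => ?_⟩
  · exact le_sup (f := Prod.fst) (mem_filter.2 ⟨h, (rfl : (p, q).2 = q)⟩)
  obtain ⟨b, hb, hpb⟩ := (Finset.le_sup_iff hp).1 hle
  rw [mem_filter] at hb
  exact hZ.2 b hb.1 (p, q) hp hq hpb hb.2.ge

lemma content_injOn_hook : Set.InjOn content (hook Z i j) := by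
  intro x hx y hy hxy
  simp only [coe_filter, hook, content] at hx hy hxy
  rcases hx.2 with ⟨_, _⟩ | ⟨_, _⟩ <;> rcases hy.2 with ⟨_, _⟩ | ⟨_, _⟩ <;>
    exact Prod.ext (by omega) (by omega)

lemma IsYD.image_content_hook (hZ : IsYD Z) (hij : (i, j) ∈ Z) :
    (hook Z i j).image content = Icc ((j : ℤ) - colLen Z j) ((rowLen Z i : ℤ) - i) := by
  have hi := hZ.mem_iff_le_rowLen.1 hij
  have hj := hZ.mem_iff_le_colLen.1 hij
  ext k
  simp only [mem_image, mem_Icc, hook, mem_filter, content]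
  constructor
  · rintro ⟨⟨p, q⟩, ⟨hpq, ⟨hp, _⟩ | ⟨hq, _⟩⟩, rfl⟩ <;> dsimp only at *
    · subst hp
      have := (hZ.mem_iff_le_rowLen.1 hpq).2.2
      omega
    · subst hq
      have := (hZ.mem_iff_le_colLen.1 hpq).2.2
      omega
  · rintro ⟨hkL, hkR⟩
    by_cases hk : (j : ℤ) - i ≤ k
    · refine ⟨(i, (k + i).toNat), ⟨?_, .inl ⟨rfl, by omega⟩⟩, by simp only; omega⟩
      exact hZ.mem_iff_le_rowLen.2 ⟨by omega, by omega, by omega⟩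
    · refine ⟨((j - k).toNat, j), ⟨?_, .inr ⟨rfl, by omega⟩⟩, by simp only; omega⟩
      exact hZ.mem_iff_le_colLen.2 ⟨by omega, by omega, by omega⟩

lemma IsYD.map_content_hook (hZ : IsYD Z) (hij : (i, j) ∈ Z) :
    (hook Z i j).val.map content = (Icc ((j : ℤ) - colLen Z j) ((rowLen Z i : ℤ) - i)).val := by
  rw [← hZ.image_content_hook hij, image_val_of_injOn content_injOn_hook]

lemma IsYD.card_filter_hook_content (hZ : IsYD Z) (hij : (i, j) ∈ Z) (k : ℤ) :
    ((hook Z i j).filter fun b => content b = k).card =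
      if (j : ℤ) - colLen Z j ≤ k ∧ k ≤ (rowLen Z i : ℤ) - i then 1 else 0 := by
  have := Multiset.count_map content (hook Z i j).val k
  rw [hZ.map_content_hook hij] at this
  simp only [Multiset.count_eq_of_nodup (nodup _), mem_val, mem_Icc] at this
  simpa [card_def, eq_comm] using this.symm

lemma IsYD.dk_removeHook (hZ : IsYD Z) (hij : (i, j) ∈ Z) :
    dk (removeHook Z i j) = cut (dk Z) ((j : ℤ) - colLen Z j) ((rowLen Z i : ℤ) - i) := by
  funext k
  have hsplit : (Z \ hook Z i j).filter (fun b => content b = k) =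
      Z.filter (fun b => content b = k) \ (hook Z i j).filter (fun b => content b = k) := by
    ext b
    simp only [mem_sdiff, mem_filter]
    tauto
  have hsub : (hook Z i j).filter (fun b => content b = k) ⊆ Z.filter (fun b => content b = k) :=
    filter_subset_filter _ (filter_subset _ _)
  have hle := card_le_card hsub
  rw [hZ.card_filter_hook_content hij] at hle
  rw [dk_eq_card_filter_content, removeHook, filter_image,
    card_image_of_injOn ((shiftBox_injOn Z i j).mono (filter_subset _ _))]
  simp only [content_shiftBox]
  rw [hsplit, card_sdiff_of_subset hsub, hZ.card_filter_hook_content hij, cut,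
    dk_eq_card_filter_content]
  split_ifs at hle ⊢ <;> omega

lemma IsYD.amul_hook (hZ : IsYD Z) (hij : (i, j) ∈ Z) (m n : ℕ) :
    Amul m n (hook Z i j) =
      (Icc ((j : ℤ) - colLen Z j) ((rowLen Z i : ℤ) - i)).val.map (hookValue m n) := by
  rw [Amul, ← hZ.map_content_hook hij, Multiset.map_map]
  exact Multiset.map_congr rfl fun b _ => unimodal_eq_hookValue_content m n b

lemma IsYD.dk_le_dk_sub_one (hZ : IsYD Z) (k : ℤ) :
    dk Z k ≤ dk Z (k - 1) + if k ≤ 0 then 1 else 0 := by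
  have hinj : Set.InjOn (fun b : ℕ × ℕ => (b.1, b.2 - 1)) Z := fun x hx y hy h => by
    have := hZ.1 x hx; have := hZ.1 y hy
    simp only [Prod.mk.injEq] at h; exact Prod.ext (by omega) (by omega)
  have hmaps : ∀ b ∈ Z, content b = k →
      ((b.1, b.2 - 1) ∈ Z ∧ content (b.1, b.2 - 1) = k - 1) ∨
        k ≤ 0 ∧ b = ((1 - k).toNat, 1) :=
    fun b hb hk => by
      have := hZ.1 b hb
      simp only [content] at hk ⊢
      by_cases h : 2 ≤ b.2
      · exact .inl ⟨hZ.2 b hb _ this.1 (by omega) le_rfl (by omega), by omega⟩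
      · exact .inr ⟨by omega, Prod.ext (by omega) (by omega)⟩
  split_ifs with hk
  · exact_mod_cast dk_le_dk_add_card _ {((1 - k).toNat, 0)} hinj fun b hb hc =>
      (hmaps b hb hc).imp_right fun h => by simp [h.2]
  · simpa using dk_le_dk_add_card _ ∅ hinj fun b hb hc =>
      .inl ((hmaps b hb hc).resolve_right fun h => hk h.1)

lemma IsYD.dk_sub_one_le_dk (hZ : IsYD Z) (k : ℤ) :
    dk Z (k - 1) ≤ dk Z k + if 0 < k then 1 else 0 := by
  have hinj : Set.InjOn (fun b : ℕ × ℕ => (b.1 - 1, b.2)) Z := fun x hx y hy h => by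
    have := hZ.1 x hx; have := hZ.1 y hy
    simp only [Prod.mk.injEq] at h; exact Prod.ext (by omega) (by omega)
  have hmaps : ∀ b ∈ Z, content b = k - 1 →
      ((b.1 - 1, b.2) ∈ Z ∧ content (b.1 - 1, b.2) = k) ∨ 0 < k ∧ b = (1, k.toNat) :=
    fun b hb hk => by
      have := hZ.1 b hb
      simp only [content] at hk ⊢
      by_cases h : 2 ≤ b.1
      · exact .inl ⟨hZ.2 b hb _ (by omega) this.2 (by omega) le_rfl, by omega⟩
      · exact .inr ⟨by omega, Prod.ext (by omega) (by omega)⟩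
  split_ifs with hk
  · exact_mod_cast dk_le_dk_add_card _ {(0, k.toNat)} hinj fun b hb hc =>
      (hmaps b hb hc).imp_right fun h => by simp [h.2]
  · simpa using dk_le_dk_add_card _ ∅ hinj fun b hb hc =>
      .inl ((hmaps b hb hc).resolve_right fun h => hk h.1)

lemma IsYD.adjacencyCond_dk (hZ : IsYD Z) : AdjacencyCond (dk Z) := fun k => by
  have h₁ := hZ.dk_le_dk_sub_one k
  have h₂ := hZ.dk_sub_one_le_dk k
  unfold adjPair
  split_ifs at h₁ h₂ ⊢ <;> omega

lemma IsYD.sub_colLen_le_rowLen_sub (hZ : IsYD Z) (hij : (i, j) ∈ Z) :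
    (j : ℤ) - colLen Z j ≤ (rowLen Z i : ℤ) - i := by
  have := (hZ.mem_iff_le_colLen.1 hij).2.2
  have := (hZ.mem_iff_le_rowLen.1 hij).2.2
  omega

lemma IsYD.amul_hook_of_dk_removeHook (hZ : IsYD Z) (hij : (i, j) ∈ Z) (hlr : l ≤ r)
    (h : dk (removeHook Z i j) = cut (dk Z) l r) (m n : ℕ) :
    Amul m n (hook Z i j) = (Icc l r).val.map (hookValue m n) := by
  obtain ⟨rfl, rfl⟩ :=
    cut_inj (hZ.sub_colLen_le_rowLen_sub hij) hlr ((hZ.dk_removeHook hij).symm.trans h)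
  exact hZ.amul_hook hij m n

lemma IsYD.dk_removeHook_of_amul_hook {m n : ℕ} (hZ : IsYD Z) (hij : (i, j) ∈ Z) (hlr : l ≤ r)
    (h : Amul m n (hook Z i j) = (Icc l r).val.map (hookValue m n)) :
    dk (removeHook Z i j) = cut (dk Z) l r ∨
      dk (removeHook Z i j) = cut (dk Z) ((n : ℤ) - m - r) ((n : ℤ) - m - l) := by
  rw [hZ.dk_removeHook hij]
  rcases Icc_eq_or_reflect_of_map_hookValue_eq (hZ.sub_colLen_le_rowLen_sub hij) hlr
    ((hZ.amul_hook hij m n).symm.trans h) with ⟨hL, hR⟩ | ⟨hL, hR⟩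
  · exact .inl (by rw [hL, hR])
  · exact .inr (by rw [hL, hR])

end YoungDiagram

theorem stmt7_general (m n : ℕ)
    (Y : Finset (ℕ × ℕ)) (hY : IsYD Y)
    (i j : ℕ) (hij : (i, j) ∈ Y) (l r : ℤ)
    (hlr : l ≤ r)
    (hcut : dk (removeHook Y i j) = cut (dk Y) l r)
    (i' j' : ℕ) (hij' : (i', j') ∈ removeHook Y i j)
    (hA : Amul m n (hook (removeHook Y i j) i' j') = Amul m n (hook Y i j)) :
    dk (removeHook (removeHook Y i j) i' j') =
      cut (dk (removeHook Y i j)) ((n : ℤ) - (m : ℤ) - r) ((n : ℤ) - (m : ℤ) - l) ∧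
    ¬∃ i'' j'' : ℕ, (i'', j'') ∈ removeHook (removeHook Y i j) i' j' ∧
        Amul m n (hook (removeHook (removeHook Y i j) i' j') i'' j'') =
          Amul m n (hook Y i j) := by
  have hA₀ := hY.amul_hook_of_dk_removeHook hij hlr hcut m n
  have hY₁ := isYD_removeHook hY hij
  have hY₂ := isYD_removeHook hY₁ hij'
  have hadj := hY.adjacencyCond_dk
  have hadj₁ := hY₁.adjacencyCond_dk
  have hadj₂ := hY₂.adjacencyCond_dk
  rcases hY₁.dk_removeHook_of_amul_hook hij' hlr (hA.trans hA₀) with h₂ | h₂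
  · rw [h₂, hcut] at hadj₂
    exact (hadj.not_cut_cut (hcut ▸ hadj₁) hlr hadj₂).elim
  refine ⟨h₂, fun ⟨i'', j'', hij'', hA''⟩ => ?_⟩
  have hadj₃ := (isYD_removeHook hY₂ hij'').adjacencyCond_dk
  rw [h₂] at hadj₂
  rcases hY₂.dk_removeHook_of_amul_hook hij'' hlr (hA''.trans hA₀) with h₃ | h₃ <;>
    rw [h₃, h₂] at hadj₃
  · rw [hcut] at hadj₁ hadj₂ hadj₃
    exact hadj.not_cut_cut_cut hadj₁ hadj₂ hlr hadj₃
  · exact hadj₁.not_cut_cut hadj₂ (by omega) hadj₃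

theorem stmt7 (m n : ℕ) (hm : 1 ≤ m) (hn : 1 ≤ n)
    (Y : Finset (ℕ × ℕ)) (hY : IsYD Y) (hsub : Y ⊆ rect m n)
    (i j : ℕ) (hij : (i, j) ∈ Y) (l r : ℤ)
    (hl : -(m : ℤ) < l) (hlr : l ≤ r) (hr : r < (n : ℤ))
    (hcut : dk (removeHook Y i j) = cut (dk Y) l r)
    (i' j' : ℕ) (hij' : (i', j') ∈ removeHook Y i j)
    (hA : Amul m n (hook (removeHook Y i j) i' j') = Amul m n (hook Y i j)) :
    dk (removeHook (removeHook Y i j) i' j') =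
      cut (dk (removeHook Y i j)) ((n : ℤ) - (m : ℤ) - r) ((n : ℤ) - (m : ℤ) - l) ∧
    ¬∃ i'' j'' : ℕ, (i'', j'') ∈ removeHook (removeHook Y i j) i' j' ∧
        Amul m n (hook (removeHook (removeHook Y i j) i' j') i'' j'') =
          Amul m n (hook Y i j) :=
  stmt7_general m n Y hY i j hij l r hlr hcut i' j' hij' hA
end

section
/- Let m ≤ n with m+n even and c = (n−m)/2. For all l, r ∈ ℤ and every sequence a ∈ ℕ₀^{m+n+1}, one has E(a_{[l,r]}) = E(a)_{[e_l(l), e_r(r)]}. Consequently, for every Young diagram Y contained in Y_{m,n} and all −m < l ≤ r < n, d(Y)_{[l,r]} ∈ D_{m,n} if and only if d(E(Y))_{[e_l(l), e_r(r)]} ∈ D_{m,n+1}. -/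
open Finset

/-! Duplicating the `c`-th entry of a sequence creates a flat step, which the adjacency condition
allows on the non-increasing side `0 ≤ c ≤ n`; every other adjacent pair of `E(a)` is an adjacent
pair of `a`, so `E` preserves and reflects `D`. Cutting commutes with `E` once the endpoints are
moved by `e_l`, `e_r`: the two copies of `a_c` are cut together exactly when `l ≤ c ≤ r`. Hence
both sides of the equivalence are the same statement about `E(d(Y)_{[l,r]})`. -/

lemma emap_cut (c : ℤ) (a : ℤ → ℤ) (l r : ℤ) :
    Emap c (cut a l r) = cut (Emap c a) (el c l) (er c r) := by
  funext k
  simp only [Emap, cut, el, er]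
  split_ifs <;> omega

section

variable {m n : ℕ} {c : ℤ} {b : ℤ → ℤ}

lemma emap_of_le {k : ℤ} (h : k ≤ c) : Emap c b k = b k := if_pos h

lemma emap_el (k : ℤ) : Emap c b (el c k) = b k := by
  unfold Emap el; split_ifs <;> first | rfl | omega | simp

lemma emap_er (k : ℤ) : Emap c b (er c k) = b k := by
  unfold Emap er; split_ifs <;> first | rfl | omega | simp

lemma er_sub_one (i : ℤ) : er c (i - 1) = el c i - 1 := by
  unfold el er; split_ifs <;> omega

lemma Dseq.emap (hc0 : 0 ≤ c) (hcn : c ≤ n) (h : Dseq m n b) :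
    Dseq m (n + 1) (Emap c b) := by
  obtain ⟨h0, hneg, hpos, hL, hR⟩ := h
  refine ⟨fun k => ?_, fun k hk => ?_, fun k hk => ?_, fun i h1 h2 => ?_, fun i h1 h2 => ?_⟩ <;>
    simp only [Emap]
  · split_ifs <;> apply h0
  · rw [if_pos (by omega)]; exact hneg k hk
  · rw [if_neg (by omega)]; exact hpos _ (by omega)
  · rw [if_pos (by omega), if_pos (by omega)]; exact hL i h1 h2
  · have := hR i; have := hR (i - 1)
    split_ifs <;> omega

lemma Dseq.of_emap (hc0 : 0 ≤ c) (hcn : c ≤ n) (h : Dseq m (n + 1) (Emap c b)) :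
    Dseq m n b := by
  obtain ⟨h0, hneg, hpos, hL, hR⟩ := h
  refine ⟨fun k => ?_, fun k hk => ?_, fun k hk => ?_, fun i h1 h2 => ?_, fun i h1 h2 => ?_⟩
  · simpa only [emap_el] using h0 (el c k)
  · simpa only [emap_of_le (b := b) (by omega : k ≤ c)] using hneg k hk
  · have her : er c k = k + 1 := if_neg (by omega)
    simpa only [← her, emap_er] using hpos (k + 1) (by push_cast; omega)
  · simpa only [emap_of_le (b := b) (by omega : i ≤ c), emap_of_le (b := b) (by omega : i - 1 ≤ c)]
      using hL i h1 h2
  · have hel : i ≤ el c i ∧ el c i ≤ i + 1 := by unfold el; split_ifs <;> omega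
    simpa only [← er_sub_one, emap_el, emap_er] using hR (el c i) (by omega) (by push_cast; omega)

lemma dseq_emap_iff (hc0 : 0 ≤ c) (hcn : c ≤ n) : Dseq m (n + 1) (Emap c b) ↔ Dseq m n b :=
  ⟨Dseq.of_emap hc0 hcn, Dseq.emap hc0 hcn⟩

end

theorem stmt8_general (m n : ℕ) (hmn : m ≤ n)
    (c : ℤ) (hc : 2 * c = (n : ℤ) - (m : ℤ)) :
    (∀ a : ℤ → ℤ, (∀ k, 0 ≤ a k) →
      ∀ l r : ℤ, Emap c (cut a l r) = cut (Emap c a) (el c l) (er c r)) ∧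
    (∀ Y : Finset (ℕ × ℕ), IsYD Y → Y ⊆ rect m n →
      ∀ l r : ℤ, -(m : ℤ) < l → l ≤ r → r < (n : ℤ) →
        (Dseq m n (cut (dk Y) l r) ↔
          Dseq m (n + 1) (cut (Emap c (dk Y)) (el c l) (er c r)))) := by
  refine ⟨fun a _ l r => emap_cut c a l r, fun Y _ _ l r _ _ _ => ?_⟩
  rw [← emap_cut, dseq_emap_iff (by omega) (by omega)]

theorem stmt8 (m n : ℕ) (hm : 1 ≤ m) (hmn : m ≤ n) (heven : Even (m + n))
    (c : ℤ) (hc : 2 * c = (n : ℤ) - (m : ℤ)) :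
    (∀ a : ℤ → ℤ, (∀ k, 0 ≤ a k) →
      ∀ l r : ℤ, Emap c (cut a l r) = cut (Emap c a) (el c l) (er c r)) ∧
    (∀ Y : Finset (ℕ × ℕ), IsYD Y → Y ⊆ rect m n →
      ∀ l r : ℤ, -(m : ℤ) < l → l ≤ r → r < (n : ℤ) →
        (Dseq m n (cut (dk Y) l r) ↔
          Dseq m (n + 1) (cut (Emap c (dk Y)) (el c l) (er c r)))) :=
  stmt8_general m n hmn c hc
end

section
/- Let m ≤ n with m+n even and c = (n−m)/2. Then every position Y ∈ T(Y_{m,n+1}) of MHRG(m,n+1) satisfies d_c(Y) = d_{c+1}(Y). -/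
open Finset

/-!
Read a Young diagram through its edge sequence `bit Y x ∈ {0, 1}`, one bit per diagonal: removing
a hook that occupies the diagonals `l, …, r` flips bit `l` from `1` to `0` and bit `r + 1` from `0`
to `1`. In MHRG(m, n) the unimodal number of a box only depends on its diagonal `k` and is symmetric
under `k ↦ n - m - k`, and the multiset of a hook determines its run of diagonals up to this
reflection. So a forced second removal takes exactly the reflected hook, and the two removals flip
bits symmetrically under `x ↦ n - m + 1 - x`.

The invariant is that no two mirror positions both carry `0`. It holds for the rectangle; a double
removal preserves it because its flips are symmetric, and a single removal does because a violation
would exhibit the reflected hook, whose removal would then have been forced. For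
`n + 1 - m = 2c + 1` the position `c + 1` is its own mirror, so its bit is `1`, i.e.
`d_c = d_{c+1}`.
-/

namespace MHRG

lemma eq_Icc_of_forall_le_of_closed (I : Finset ℤ) (s : ℤ) (h₁ : ∀ x ∈ I, s ≤ x)
    (h₂ : ∀ x ∈ I, ∀ y, s ≤ y → y ≤ x → y ∈ I) :
    I = Finset.Icc s (s + I.card - 1) := by
  ext x
  rw [Finset.mem_Icc]
  constructor
  · intro hx
    have := Finset.card_le_card fun y hy =>
      h₂ x hx y (Finset.mem_Icc.1 hy).1 (Finset.mem_Icc.1 hy).2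
    rw [Int.card_Icc] at this
    exact ⟨h₁ x hx, by omega⟩
  · rintro ⟨hs, hx⟩
    by_contra hxI
    have hsub : I ⊆ Finset.Icc s (x - 1) := fun y hy =>
      Finset.mem_Icc.2 ⟨h₁ y hy, by by_contra; exact hxI (h₂ y hy x hs (by omega))⟩
    have := Finset.card_le_card hsub
    rw [Int.card_Icc] at this
    omega

section Diagonals

variable {Y : Finset (ℕ × ℕ)}

def diagRows (Y : Finset (ℕ × ℕ)) (k : ℤ) : Finset ℤ :=
  (Y.filter fun p => (p.2 : ℤ) - (p.1 : ℤ) = k).image fun p => (p.1 : ℤ)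

def firstRow (k : ℤ) : ℤ := max 1 (1 - k)

/-- The row of the last box on diagonal `k`; it is `firstRow k - 1` when the diagonal is empty. -/
def lastRow (Y : Finset (ℕ × ℕ)) (k : ℤ) : ℤ := firstRow k + dk Y k - 1

lemma mem_diagRows {k x : ℤ} :
    x ∈ diagRows Y k ↔ ∃ p ∈ Y, (p.1 : ℤ) = x ∧ (p.2 : ℤ) = x + k := by
  simp only [diagRows, Finset.mem_image, Finset.mem_filter]
  constructor
  · rintro ⟨p, ⟨hp, hd⟩, rfl⟩
    exact ⟨p, hp, rfl, by omega⟩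
  · rintro ⟨p, hp, h₁, h₂⟩
    exact ⟨p, ⟨hp, by omega⟩, h₁⟩

lemma dk_eq_card_diagRows (Y : Finset (ℕ × ℕ)) (k : ℤ) : dk Y k = (diagRows Y k).card := by
  rw [dk, diagRows, Finset.card_image_of_injOn]
  intro p hp q hq h
  simp only [Finset.coe_filter, Set.mem_ofPred_eq] at hp hq h
  ext <;> omega

lemma diagRows_closed (hY : IsYD Y) {k k' x x' : ℤ} (hx : x ∈ diagRows Y k)
    (h₁ : 1 ≤ x') (h₂ : x' ≤ x) (h₃ : 1 ≤ x' + k') (h₄ : x' + k' ≤ x + k) :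
    x' ∈ diagRows Y k' := by
  obtain ⟨p, hp, hp₁, hp₂⟩ := mem_diagRows.1 hx
  refine mem_diagRows.2 ⟨(x'.toNat, (x' + k').toNat), ?_, by simp; omega, by simp; omega⟩
  exact hY.2 p hp _ (by omega) (by omega) (by omega) (by omega)

lemma diagRows_eq_Icc (hY : IsYD Y) (k : ℤ) :
    diagRows Y k = Finset.Icc (firstRow k) (lastRow Y k) := by
  have hfirst : ∀ x ∈ diagRows Y k, firstRow k ≤ x := by
    intro x hx
    obtain ⟨p, hp, h₁, h₂⟩ := mem_diagRows.1 hx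
    have := hY.1 p hp
    rw [firstRow]
    omega
  rw [eq_Icc_of_forall_le_of_closed _ _ hfirst fun x hx y hy hyx =>
    diagRows_closed hY hx (by rw [firstRow] at hy; omega) hyx
      (by rw [firstRow] at hy; omega) (by omega), lastRow, dk_eq_card_diagRows]

lemma mem_diagRows_iff (hY : IsYD Y) {k x : ℤ} :
    x ∈ diagRows Y k ↔ firstRow k ≤ x ∧ x ≤ lastRow Y k := by
  rw [diagRows_eq_Icc hY, Finset.mem_Icc]

lemma dk_nonneg (Y : Finset (ℕ × ℕ)) (k : ℤ) : 0 ≤ dk Y k := Int.natCast_nonneg _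

lemma firstRow_sub_one_le_lastRow (Y : Finset (ℕ × ℕ)) (k : ℤ) :
    firstRow k - 1 ≤ lastRow Y k := by
  have := dk_nonneg Y k
  unfold lastRow
  omega

lemma lastRow_succ_le (hY : IsYD Y) (k : ℤ) : lastRow Y (k + 1) ≤ lastRow Y k := by
  by_contra! h
  have h₀ := firstRow_sub_one_le_lastRow Y k
  unfold firstRow at h₀
  have hmem : lastRow Y (k + 1) ∈ diagRows Y (k + 1) :=
    (mem_diagRows_iff hY).2 ⟨by unfold firstRow; omega, le_rfl⟩
  have := (mem_diagRows_iff hY).1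
    (diagRows_closed (k' := k) hY hmem (by omega) le_rfl (by omega) (by omega))
  omega

lemma lastRow_le_lastRow_succ_add_one (hY : IsYD Y) (k : ℤ) :
    lastRow Y k ≤ lastRow Y (k + 1) + 1 := by
  by_contra! h
  have h₀ := firstRow_sub_one_le_lastRow Y (k + 1)
  unfold firstRow at h₀
  have hmem : lastRow Y k ∈ diagRows Y k :=
    (mem_diagRows_iff hY).2 ⟨by unfold firstRow; omega, le_rfl⟩
  have := (mem_diagRows_iff hY).1 (diagRows_closed (k' := k + 1) (x' := lastRow Y k - 1) hY hmem
    (by omega) (by omega) (by omega) (by omega))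
  omega

lemma lastRow_antitone (hY : IsYD Y) : Antitone (lastRow Y) :=
  antitone_int_of_succ_le (lastRow_succ_le hY)

lemma lastRow_add_monotone (hY : IsYD Y) : Monotone fun k => lastRow Y k + k :=
  monotone_int_of_le_succ fun k => by
    have := lastRow_le_lastRow_succ_add_one hY k
    omega

/-- The edge sequence of the boundary of `Y`, indexed by diagonals. -/
def bit (Y : Finset (ℕ × ℕ)) (x : ℤ) : ℤ := dk Y x - dk Y (x - 1) + if 1 ≤ x then 1 else 0

lemma bit_eq_lastRow (Y : Finset (ℕ × ℕ)) (x : ℤ) :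
    bit Y x = lastRow Y x - lastRow Y (x - 1) + 1 := by
  unfold bit lastRow firstRow
  split_ifs <;> omega

lemma bit_eq_zero_or_one (hY : IsYD Y) (x : ℤ) : bit Y x = 0 ∨ bit Y x = 1 := by
  have h₁ := lastRow_succ_le hY (x - 1)
  have h₂ := lastRow_le_lastRow_succ_add_one hY (x - 1)
  rw [sub_add_cancel] at h₁ h₂
  rw [bit_eq_lastRow]
  omega

end Diagonals

section Hooks

variable {Y : Finset (ℕ × ℕ)} {i j : ℕ}

def rowCols (Y : Finset (ℕ × ℕ)) (i : ℕ) : Finset ℤ :=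
  (Y.filter fun p => p.1 = i).image fun p => (p.2 : ℤ)

def colRows (Y : Finset (ℕ × ℕ)) (j : ℕ) : Finset ℤ :=
  (Y.filter fun p => p.2 = j).image fun p => (p.1 : ℤ)

def rowLength (Y : Finset (ℕ × ℕ)) (i : ℕ) : ℤ := (rowCols Y i).card

def colLength (Y : Finset (ℕ × ℕ)) (j : ℕ) : ℤ := (colRows Y j).card

def rowEndDiag (Y : Finset (ℕ × ℕ)) (i : ℕ) : ℤ := rowLength Y i - i

def colEndDiag (Y : Finset (ℕ × ℕ)) (j : ℕ) : ℤ := j - colLength Y j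

lemma mem_rowCols {x : ℤ} : x ∈ rowCols Y i ↔ ∃ p ∈ Y, p.1 = i ∧ (p.2 : ℤ) = x := by
  simp only [rowCols, Finset.mem_image, Finset.mem_filter, and_assoc]

lemma mem_colRows {x : ℤ} : x ∈ colRows Y j ↔ ∃ p ∈ Y, p.2 = j ∧ (p.1 : ℤ) = x := by
  simp only [colRows, Finset.mem_image, Finset.mem_filter, and_assoc]

lemma mem_rowCols_iff_mem_diagRows {x : ℤ} :
    x ∈ rowCols Y i ↔ (i : ℤ) ∈ diagRows Y (x - i) := by
  rw [mem_rowCols, mem_diagRows]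
  exact exists_congr fun p => and_congr_right fun _ => by omega

lemma mem_colRows_iff_mem_diagRows {x : ℤ} : x ∈ colRows Y j ↔ x ∈ diagRows Y (j - x) := by
  rw [mem_colRows, mem_diagRows]
  exact exists_congr fun p => and_congr_right fun _ => by omega

lemma mem_rowCols_iff (hY : IsYD Y) {x : ℤ} : x ∈ rowCols Y i ↔ 1 ≤ x ∧ x ≤ rowLength Y i := by
  have hpos : ∀ x ∈ rowCols Y i, 1 ≤ x := by
    intro x hx
    obtain ⟨p, hp, -, rfl⟩ := mem_rowCols.1 hx
    exact_mod_cast (hY.1 p hp).2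
  have hclosed : ∀ x ∈ rowCols Y i, ∀ y, 1 ≤ y → y ≤ x → y ∈ rowCols Y i := by
    intro x hx y hy hyx
    obtain ⟨p, hp, rfl, rfl⟩ := mem_rowCols.1 hx
    exact mem_rowCols.2 ⟨(p.1, y.toNat),
      hY.2 p hp _ (hY.1 p hp).1 (by omega) le_rfl (by omega), rfl, by omega⟩
  rw [eq_Icc_of_forall_le_of_closed _ _ hpos hclosed, Finset.mem_Icc, rowLength]
  omega

lemma mem_colRows_iff (hY : IsYD Y) {x : ℤ} : x ∈ colRows Y j ↔ 1 ≤ x ∧ x ≤ colLength Y j := by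
  have hpos : ∀ x ∈ colRows Y j, 1 ≤ x := by
    intro x hx
    obtain ⟨p, hp, -, rfl⟩ := mem_colRows.1 hx
    exact_mod_cast (hY.1 p hp).1
  have hclosed : ∀ x ∈ colRows Y j, ∀ y, 1 ≤ y → y ≤ x → y ∈ colRows Y j := by
    intro x hx y hy hyx
    obtain ⟨p, hp, rfl, rfl⟩ := mem_colRows.1 hx
    exact mem_colRows.2 ⟨(y.toNat, p.2),
      hY.2 p hp _ (by omega) (hY.1 p hp).2 (by omega) le_rfl, rfl, by omega⟩
  rw [eq_Icc_of_forall_le_of_closed _ _ hpos hclosed, Finset.mem_Icc, colLength]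
  omega

lemma colEndDiag_le_rowEndDiag (hY : IsYD Y) (hij : (i, j) ∈ Y) :
    colEndDiag Y j ≤ (j : ℤ) - i ∧ (j : ℤ) - i ≤ rowEndDiag Y i := by
  have h₁ := (mem_colRows_iff hY).1 (mem_colRows.2 ⟨(i, j), hij, rfl, rfl⟩)
  have h₂ := (mem_rowCols_iff hY).1 (mem_rowCols.2 ⟨(i, j), hij, rfl, rfl⟩)
  dsimp only at h₁ h₂
  unfold colEndDiag rowEndDiag
  omega

lemma injOn_diag_hook : Set.InjOn (fun p : ℕ × ℕ => (p.2 : ℤ) - p.1) (hook Y i j) := by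
  intro p hp q hq h
  simp only [Finset.mem_coe, hook, Finset.mem_filter] at hp hq h
  ext <;> omega

lemma image_diag_hook (hY : IsYD Y) (hij : (i, j) ∈ Y) :
    (hook Y i j).image (fun p : ℕ × ℕ => (p.2 : ℤ) - p.1) =
      Finset.Icc (colEndDiag Y j) (rowEndDiag Y i) := by
  have hb := colEndDiag_le_rowEndDiag hY hij
  have hco := hY.1 _ hij
  ext k
  simp only [Finset.mem_image, Finset.mem_Icc, hook, Finset.mem_filter]
  constructor
  · rintro ⟨p, ⟨hp, ⟨rfl, hpj⟩ | ⟨rfl, hpi⟩⟩, rfl⟩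
    · have := (mem_rowCols_iff hY).1 (mem_rowCols.2 ⟨p, hp, rfl, rfl⟩)
      unfold colEndDiag rowEndDiag at *
      omega
    · have := (mem_colRows_iff hY).1 (mem_colRows.2 ⟨p, hp, rfl, rfl⟩)
      unfold colEndDiag rowEndDiag at *
      omega
  · rintro ⟨hl, hr⟩
    rcases le_or_gt ((j : ℤ) - i) k with hk | hk
    · obtain ⟨p, hp, hpi, hpk⟩ := mem_rowCols.1 ((mem_rowCols_iff hY (i := i) (x := i + k)).2
        (by unfold rowEndDiag at hr; omega))
      exact ⟨p, ⟨hp, Or.inl ⟨hpi, by omega⟩⟩, by omega⟩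
    · obtain ⟨p, hp, hpj, hpk⟩ := mem_colRows.1 ((mem_colRows_iff hY (j := j) (x := j - k)).2
        (by unfold colEndDiag at hl; omega))
      exact ⟨p, ⟨hp, Or.inr ⟨hpj, by omega⟩⟩, by omega⟩

lemma card_filter_diag_hook (hY : IsYD Y) (hij : (i, j) ∈ Y) (k : ℤ) :
    (((hook Y i j).filter fun p => (p.2 : ℤ) - (p.1 : ℤ) = k).card : ℤ) =
      if colEndDiag Y j ≤ k ∧ k ≤ rowEndDiag Y i then 1 else 0 := by
  have himage : ((hook Y i j).filter fun p => (p.2 : ℤ) - (p.1 : ℤ) = k).image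
      (fun p : ℕ × ℕ => (p.2 : ℤ) - p.1) =
        ((hook Y i j).image fun p : ℕ × ℕ => (p.2 : ℤ) - p.1).filter (· = k) := by
    rw [Finset.filter_image]
  rw [← Finset.card_image_of_injOn (injOn_diag_hook.mono (Finset.filter_subset _ _)), himage,
    image_diag_hook hY hij, Finset.filter_eq']
  split_ifs with h₁ h₂ h₂ <;> simp_all

lemma mem_removeHook_iff (hY : IsYD Y) (q : ℕ × ℕ) :
    q ∈ removeHook Y i j ↔
      (q ∈ Y ∧ (q.1 < i ∨ q.2 < j)) ∨ ((q.1 + 1, q.2 + 1) ∈ Y ∧ i ≤ q.1 ∧ j ≤ q.2) := by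
  simp only [removeHook, Finset.mem_image, Finset.mem_sdiff, hook, Finset.mem_filter]
  constructor
  · rintro ⟨p, ⟨hp, hph⟩, rfl⟩
    have := hY.1 p hp
    replace hph : ¬(p.1 = i ∧ j ≤ p.2 ∨ p.2 = j ∧ i ≤ p.1) := fun h => hph ⟨hp, h⟩
    unfold shiftBox
    split_ifs with h
    · exact Or.inr ⟨by convert hp using 2 <;> omega, by omega, by omega⟩
    · exact Or.inl ⟨hp, by omega⟩
  · rintro (⟨hq, hq'⟩ | ⟨hq, hqi, hqj⟩)
    · exact ⟨q, ⟨hq, by omega⟩, by unfold shiftBox; rw [if_neg (by omega)]⟩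
    · exact ⟨_, ⟨hq, by omega⟩, by unfold shiftBox; rw [if_pos (by omega)]; rfl⟩

lemma isYD_removeHook (hY : IsYD Y) (hij : (i, j) ∈ Y) : IsYD (removeHook Y i j) := by
  have hij' := hY.1 _ hij
  constructor
  · intro p hp
    rcases (mem_removeHook_iff hY p).1 hp with ⟨hp, -⟩ | ⟨-, hpi, hpj⟩
    · exact hY.1 p hp
    · exact ⟨hij'.1.trans hpi, hij'.2.trans hpj⟩
  · intro p hp q hq₁ hq₂ hq₃ hq₄
    rw [mem_removeHook_iff hY] at hp ⊢
    rcases hp with ⟨hp, hp'⟩ | ⟨hp, hpi, hpj⟩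
    · exact Or.inl ⟨hY.2 p hp q hq₁ hq₂ hq₃ hq₄, by omega⟩
    · by_cases hq : i ≤ q.1 ∧ j ≤ q.2
      · exact Or.inr ⟨hY.2 _ hp (q.1 + 1, q.2 + 1) (by simp) (by simp)
          (by simp; omega) (by simp; omega), hq⟩
      · exact Or.inl ⟨hY.2 _ hp q hq₁ hq₂ (by simp; omega) (by simp; omega), by omega⟩

lemma injOn_shiftBox : Set.InjOn (shiftBox i j) (Y \ hook Y i j : Finset _) := by
  intro p hp q hq h
  simp only [Finset.coe_sdiff, Set.mem_sdiff, Finset.mem_coe, hook, Finset.mem_filter,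
    not_and] at hp hq
  have hp' := hp.2 hp.1
  have hq' := hq.2 hq.1
  unfold shiftBox at h
  split_ifs at h <;> simp only [Prod.ext_iff] at h <;> ext <;> omega

lemma dk_removeHook (hY : IsYD Y) (hij : (i, j) ∈ Y) (k : ℤ) :
    dk (removeHook Y i j) k =
      dk Y k - if colEndDiag Y j ≤ k ∧ k ≤ rowEndDiag Y i then 1 else 0 := by
  have hshift : ((removeHook Y i j).filter fun p => (p.2 : ℤ) - (p.1 : ℤ) = k) =
      ((Y \ hook Y i j).filter fun p => (p.2 : ℤ) - (p.1 : ℤ) = k).image (shiftBox i j) := by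
    rw [removeHook, Finset.filter_image]
    congr 1
    refine Finset.filter_congr fun p hp => ?_
    have := hY.1 p (Finset.mem_sdiff.1 hp).1
    unfold shiftBox
    split_ifs <;> omega
  have hsplit : ((Y \ hook Y i j).filter fun p => (p.2 : ℤ) - (p.1 : ℤ) = k) =
      (Y.filter fun p => (p.2 : ℤ) - (p.1 : ℤ) = k) \
        ((hook Y i j).filter fun p => (p.2 : ℤ) - (p.1 : ℤ) = k) := by
    ext p
    simp only [Finset.mem_filter, Finset.mem_sdiff]
    tauto
  have hhook : hook Y i j ⊆ Y := Finset.filter_subset _ _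
  have hsub := Finset.filter_subset_filter (fun p : ℕ × ℕ => (p.2 : ℤ) - (p.1 : ℤ) = k) hhook
  rw [dk, dk, hshift, Finset.card_image_of_injOn
      (injOn_shiftBox.mono (Finset.coe_subset.2 (Finset.filter_subset _ _))), hsplit,
    Finset.card_sdiff_of_subset hsub, Nat.cast_sub (Finset.card_le_card hsub),
    card_filter_diag_hook hY hij]

lemma bit_removeHook (hY : IsYD Y) (hij : (i, j) ∈ Y) (x : ℤ) :
    bit (removeHook Y i j) x =
      bit Y x - (if x = colEndDiag Y j then 1 else 0) +
        if x = rowEndDiag Y i + 1 then 1 else 0 := by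
  have := colEndDiag_le_rowEndDiag hY hij
  unfold bit
  rw [dk_removeHook hY hij, dk_removeHook hY hij]
  split_ifs <;> omega

lemma bit_colEndDiag (hY : IsYD Y) (hij : (i, j) ∈ Y) : bit Y (colEndDiag Y j) = 1 := by
  have h := bit_removeHook hY hij (colEndDiag Y j)
  have := colEndDiag_le_rowEndDiag hY hij
  rw [if_pos rfl, if_neg (by omega)] at h
  rcases bit_eq_zero_or_one hY (colEndDiag Y j) with h' | h' <;>
    rcases bit_eq_zero_or_one (isYD_removeHook hY hij (i := i) (j := j)) (colEndDiag Y j)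
      with h'' | h'' <;> omega

lemma bit_rowEndDiag_add_one (hY : IsYD Y) (hij : (i, j) ∈ Y) :
    bit Y (rowEndDiag Y i + 1) = 0 := by
  have h := bit_removeHook hY hij (rowEndDiag Y i + 1)
  have := colEndDiag_le_rowEndDiag hY hij
  rw [if_neg (by omega), if_pos rfl] at h
  rcases bit_eq_zero_or_one hY (rowEndDiag Y i + 1) with h' | h' <;>
    rcases bit_eq_zero_or_one (isYD_removeHook hY hij (i := i) (j := j)) (rowEndDiag Y i + 1)
      with h'' | h'' <;> omega

/-- The box whose hook spans the diagonals `l, …, r` sits in the row ending on diagonal `r` and in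
the column ending on diagonal `l`. -/
lemma exists_hook_of_bit (hY : IsYD Y) {l r : ℤ} (hlr : l ≤ r) (hl : bit Y l = 1)
    (hr : bit Y (r + 1) = 0) :
    ∃ i j : ℕ, (i, j) ∈ Y ∧ colEndDiag Y j = l ∧ rowEndDiag Y i = r := by
  rw [bit_eq_lastRow] at hl hr
  rw [add_sub_cancel_right] at hr
  have hanti := lastRow_antitone hY hlr
  have hmono := lastRow_add_monotone hY hlr
  have h₁ := firstRow_sub_one_le_lastRow Y (l - 1)
  have h₂ := firstRow_sub_one_le_lastRow Y (r + 1)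
  simp only at hmono
  unfold firstRow at h₁ h₂
  have hr_mem : lastRow Y r ∈ diagRows Y r := by
    rw [mem_diagRows_iff hY, firstRow]; omega
  have hl_mem : lastRow Y l ∈ diagRows Y l := by
    rw [mem_diagRows_iff hY, firstRow]; omega
  have hcorner := diagRows_closed (k' := lastRow Y l + l - lastRow Y r) hY hr_mem
    (by omega) le_rfl (by omega) (by omega)
  obtain ⟨p, hp, hp₁, hp₂⟩ := mem_diagRows.1 hcorner
  refine ⟨p.1, p.2, hp, ?_, ?_⟩
  · have hin : lastRow Y l ∈ colRows Y p.2 := by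
      rw [mem_colRows_iff_mem_diagRows, hp₂]
      convert hl_mem using 2
      ring
    have hout : lastRow Y l + 1 ∉ colRows Y p.2 := by
      rw [mem_colRows_iff_mem_diagRows, hp₂, show lastRow Y r + (lastRow Y l + l - lastRow Y r) -
        (lastRow Y l + 1) = l - 1 by ring, mem_diagRows_iff hY]
      omega
    rw [mem_colRows_iff hY] at hin hout
    unfold colEndDiag
    omega
  · have hin : lastRow Y r + r ∈ rowCols Y p.1 := by
      rw [mem_rowCols_iff_mem_diagRows, hp₁]
      convert hr_mem using 2
      ring
    have hout : lastRow Y r + r + 1 ∉ rowCols Y p.1 := by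
      rw [mem_rowCols_iff_mem_diagRows, hp₁,
        show lastRow Y r + r + 1 - lastRow Y r = r + 1 by ring, mem_diagRows_iff hY]
      omega
    rw [mem_rowCols_iff hY] at hin hout
    unfold rowEndDiag
    omega

/-- The unimodal number `α_{m,n}` of any box on diagonal `k`. -/
def diagValue (m n : ℕ) (k : ℤ) : ℤ := min (k + m) (n - k)

lemma Amul_hook (m n : ℕ) (hY : IsYD Y) (hij : (i, j) ∈ Y) :
    Amul m n (hook Y i j) =
      (Finset.Icc (colEndDiag Y j) (rowEndDiag Y i)).val.map (diagValue m n) := by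
  rw [← image_diag_hook hY hij, Finset.image_val_of_injOn injOn_diag_hook, Multiset.map_map,
    Amul]
  refine Multiset.map_congr rfl fun p _ => ?_
  simp only [Function.comp_apply, unimodal, diagValue]
  congr 1
  ring

end Hooks

section Rigidity

variable {m n : ℕ}

lemma diagValue_reflect (k : ℤ) : diagValue m n (n - m - k) = diagValue m n k := by
  unfold diagValue
  rw [min_comm]
  congr 1 <;> ring

lemma map_diagValue_Icc_reflect (l r : ℤ) :
    (Finset.Icc ((n : ℤ) - m - r) (n - m - l)).val.map (diagValue m n) =
      (Finset.Icc l r).val.map (diagValue m n) := by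
  have himage : (Finset.Icc l r).image (fun k => (n : ℤ) - m - k) =
      Finset.Icc ((n : ℤ) - m - r) (n - m - l) := by
    ext x
    simp only [Finset.mem_image, Finset.mem_Icc]
    exact ⟨by rintro ⟨k, hk, rfl⟩; omega, fun hx => ⟨n - m - x, by omega, by ring⟩⟩
  have hinj : Set.InjOn (fun k => (n : ℤ) - m - k) (Finset.Icc l r) :=
    fun a _ b _ h => by simpa using h
  rw [← himage, Finset.image_val_of_injOn hinj, Multiset.map_map]
  exact Multiset.map_congr rfl fun k _ => diagValue_reflect k

lemma three_mul_sum_sq_Icc (l r d : ℤ) (h : l - 1 ≤ r) :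
    3 * ∑ k ∈ Finset.Icc l r, (2 * k - d) ^ 2 =
      (r - l + 1) * (3 * (l + r - d) ^ 2 + (r - l + 1) ^ 2 - 1) := by
  induction r, h using Int.leInduction with
  | base => rw [Finset.Icc_eq_empty (by omega)]; ring
  | succ r hr ih =>
    rw [← Finset.insert_Icc_right_eq_Icc_add_one (by omega), Finset.sum_insert (by simp), mul_add,
      ih]
    ring

lemma sq_two_mul_diagValue (k : ℤ) :
    (2 * diagValue m n k - m - n) ^ 2 = (2 * k - (n - m)) ^ 2 := by
  unfold diagValue
  rcases min_cases (k + m) (n - k) with ⟨h, -⟩ | ⟨h, -⟩ <;> rw [h] <;> ring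

/-- The multiset of unimodal numbers of a run of consecutive diagonals determines the run up to the
reflection `k ↦ n - m - k`: it fixes the length of the run, and the sum of the squares
`(2 α - m - n)² = (2 k - (n - m))²` then fixes the distance of the run's centre from the axis. -/
lemma eq_or_eq_reflect_of_map_diagValue_eq {l r l' r' : ℤ} (hlr : l ≤ r) (hlr' : l' ≤ r')
    (h : (Finset.Icc l' r').val.map (diagValue m n) = (Finset.Icc l r).val.map (diagValue m n)) :
    (l' = l ∧ r' = r) ∨ (l' = n - m - r ∧ r' = n - m - l) := by
  have hcard := congrArg Multiset.card h
  simp only [Multiset.card_map, Finset.card_val, Int.card_Icc] at hcard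
  have hsum := congrArg (fun s : Multiset ℤ => 3 * (s.map fun a : ℤ => (2 * a - m - n) ^ 2).sum) h
  simp only [Multiset.map_map, Function.comp_def, sq_two_mul_diagValue] at hsum
  rw [← Finset.sum_eq_multiset_sum, ← Finset.sum_eq_multiset_sum,
    three_mul_sum_sq_Icc _ _ _ (by omega), three_mul_sum_sq_Icc _ _ _ (by omega),
    show r' - l' = r - l by omega] at hsum
  have hsq : (l' + r' - (n - m)) ^ 2 = (l + r - (n - m)) ^ 2 := by
    have : (0 : ℤ) < r - l + 1 := by omega
    nlinarith
  rcases sq_eq_sq_iff_eq_or_eq_neg.1 hsq with h' | h' <;> omega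

end Rigidity

section Invariant

variable {m n : ℕ} {Y : Finset (ℕ × ℕ)} {i j : ℕ}

/-- The reflection `x ↦ d + 1 - x` of the edge sequence corresponds to the reflection `k ↦ d - k`
of the diagonals: it exchanges the end bits of the hooks on diagonals `l, …, r` and
`d - r, …, d - l`. -/
def PairCovered (d : ℤ) (Y : Finset (ℕ × ℕ)) : Prop := ∀ x, 1 ≤ bit Y x + bit Y (d + 1 - x)

lemma bit_reflect_of_not_pairCovered_removeHook {d : ℤ} (hY : IsYD Y) (hij : (i, j) ∈ Y)
    (hcov : PairCovered d Y) {x : ℤ}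
    (hx : bit (removeHook Y i j) x + bit (removeHook Y i j) (d + 1 - x) < 1) :
    bit (removeHook Y i j) (d - rowEndDiag Y i) = 1 ∧
      bit (removeHook Y i j) (d + 1 - colEndDiag Y j) = 0 := by
  set l := colEndDiag Y j
  set r := rowEndDiag Y i
  have hb₁ := bit_removeHook hY hij
  have h01 := bit_eq_zero_or_one (isYD_removeHook hY hij (i := i) (j := j))
  have hr := bit_rowEndDiag_add_one hY hij
  have hlr := colEndDiag_le_rowEndDiag hY hij
  have hpair : bit (removeHook Y i j) l = 0 ∧ bit (removeHook Y i j) (d + 1 - l) = 0 := by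
    have hxl : x = l ∨ d + 1 - x = l := by
      have h₁ := hb₁ x
      have h₂ := hb₁ (d + 1 - x)
      have := hcov x
      rcases h01 x with h | h <;> rcases h01 (d + 1 - x) with h' | h' <;>
        split_ifs at h₁ h₂ <;> omega
    rcases hxl with hxl | hxl
    · subst hxl
      rcases h01 l with h | h <;> rcases h01 (d + 1 - l) with h' | h' <;> omega
    · obtain rfl : x = d + 1 - l := by omega
      rw [show d + 1 - (d + 1 - l) = l by ring] at hx
      rcases h01 l with h | h <;> rcases h01 (d + 1 - l) with h' | h' <;> omega
  refine ⟨?_, hpair.2⟩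
  have hcov' := hcov (r + 1)
  rw [hr, show d + 1 - (r + 1) = d - r by ring] at hcov'
  by_cases hdl : d - r = l
  · have := hb₁ (r + 1)
    rw [if_neg (by omega), if_pos rfl, hr, ← show d + 1 - l = r + 1 by omega, hpair.2] at this
    omega
  · by_cases hdr : d - r = r + 1
    · rw [hdr, hr] at hcov'
      omega
    · have := hb₁ (d - r)
      rw [if_neg hdl, if_neg hdr] at this
      rcases bit_eq_zero_or_one hY (d - r) with h | h <;> omega

lemma pairCovered_removeHook (hY : IsYD Y) (hij : (i, j) ∈ Y) (hcov : PairCovered (n - m) Y)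
    (hno : ¬∃ i' j' : ℕ, (i', j') ∈ removeHook Y i j ∧
      Amul m n (hook (removeHook Y i j) i' j') = Amul m n (hook Y i j)) :
    PairCovered (n - m) (removeHook Y i j) := by
  unfold PairCovered
  intro x
  by_contra! hx
  obtain ⟨h₁, h₂⟩ := bit_reflect_of_not_pairCovered_removeHook hY hij hcov hx
  have hlr := colEndDiag_le_rowEndDiag hY hij
  obtain ⟨i', j', hmem, hl', hr'⟩ := exists_hook_of_bit (isYD_removeHook hY hij)
    (by omega : (n : ℤ) - m - rowEndDiag Y i ≤ n - m - colEndDiag Y j) h₁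
    (by rwa [show (n : ℤ) - m - colEndDiag Y j + 1 = n - m + 1 - colEndDiag Y j by ring])
  exact hno ⟨i', j', hmem, by
    rw [Amul_hook m n (isYD_removeHook hY hij) hmem, Amul_hook m n hY hij, hl', hr',
      map_diagValue_Icc_reflect]⟩

lemma pairCovered_removeHook_removeHook (hY : IsYD Y) (hij : (i, j) ∈ Y)
    (hcov : PairCovered (n - m) Y) {i' j' : ℕ} (hij' : (i', j') ∈ removeHook Y i j)
    (hA : Amul m n (hook (removeHook Y i j) i' j') = Amul m n (hook Y i j)) :
    PairCovered (n - m) (removeHook (removeHook Y i j) i' j') := by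
  have hY₁ := isYD_removeHook hY hij (i := i) (j := j)
  have hlr := colEndDiag_le_rowEndDiag hY hij
  rw [Amul_hook m n hY₁ hij', Amul_hook m n hY hij] at hA
  have hlr' := colEndDiag_le_rowEndDiag hY₁ hij'
  rcases eq_or_eq_reflect_of_map_diagValue_eq (hlr.1.trans hlr.2) (hlr'.1.trans hlr'.2) hA
    with ⟨hl', -⟩ | ⟨hl', hr'⟩
  · have h₁ := bit_colEndDiag hY₁ hij'
    have h₂ := bit_removeHook hY hij (colEndDiag Y j)
    rw [hl', h₂, if_pos rfl, if_neg (by omega), bit_colEndDiag hY hij] at h₁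
    omega
  · unfold PairCovered
    intro x
    have := hcov x
    simp only [bit_removeHook hY₁ hij', bit_removeHook hY hij, hl', hr']
    split_ifs <;> omega

lemma isYD_and_pairCovered_of_move {Y' : Finset (ℕ × ℕ)} (hY : IsYD Y)
    (hcov : PairCovered (n - m) Y) (hmove : Move m n Y Y') :
    IsYD Y' ∧ PairCovered (n - m) Y' := by
  obtain ⟨i, j, hij, ⟨rfl, hno⟩ | ⟨i', j', hij', hA, rfl⟩⟩ := hmove
  · exact ⟨isYD_removeHook hY hij, pairCovered_removeHook hY hij hcov hno⟩
  · exact ⟨isYD_removeHook (isYD_removeHook hY hij) hij',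
      pairCovered_removeHook_removeHook hY hij hcov hij' hA⟩

lemma isYD_rect (m n : ℕ) : IsYD (rect m n) := by
  constructor
  · intro p hp
    simp only [rect, Finset.mem_product, Finset.mem_Icc] at hp
    omega
  · intro p hp q h₁ h₂ h₃ h₄
    simp only [rect, Finset.mem_product, Finset.mem_Icc] at hp ⊢
    omega

lemma dk_rect (m n : ℕ) (k : ℤ) :
    dk (rect m n) k = max 0 (min (m : ℤ) (n - k) - max 1 (1 - k) + 1) := by
  have h : diagRows (rect m n) k = Finset.Icc (max 1 (1 - k)) (min (m : ℤ) (n - k)) := by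
    ext x
    rw [mem_diagRows, Finset.mem_Icc]
    constructor
    · rintro ⟨p, hp, h₁, h₂⟩
      simp only [rect, Finset.mem_product, Finset.mem_Icc] at hp
      omega
    · intro hx
      refine ⟨(x.toNat, (x + k).toNat), ?_, by omega, by omega⟩
      simp only [rect, Finset.mem_product, Finset.mem_Icc]
      omega
  rw [dk_eq_card_diagRows, h, Int.card_Icc]
  omega

lemma pairCovered_rect (h : m ≤ n) : PairCovered (n - m) (rect m n) := by
  intro x
  simp only [bit, dk_rect]
  split_ifs <;> omega

theorem isYD_and_pairCovered_of_reach (h : m ≤ n) (hY : Reach m n Y) :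
    IsYD Y ∧ PairCovered (n - m) Y := by
  induction hY with
  | refl => exact ⟨isYD_rect m n, pairCovered_rect h⟩
  | tail _ hmove ih => exact isYD_and_pairCovered_of_move ih.1 ih.2 hmove

end Invariant

end MHRG

theorem stmt9_general (m n : ℕ) (hmn : m ≤ n)
    (c : ℤ) (hc : 2 * c = (n : ℤ) - (m : ℤ))
    (Y : Finset (ℕ × ℕ)) (hY : Reach m (n + 1) Y) :
    dk Y c = dk Y (c + 1) := by
  obtain ⟨hYD, hcov⟩ := MHRG.isYD_and_pairCovered_of_reach (by omega : m ≤ n + 1) hY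
  have hmid := hcov (c + 1)
  rw [show ((n + 1 : ℕ) : ℤ) - m + 1 - (c + 1) = c + 1 by push_cast; omega] at hmid
  have h01 := MHRG.bit_eq_zero_or_one hYD (c + 1)
  rw [MHRG.bit, if_pos (by omega), add_sub_cancel_right] at hmid h01
  omega

theorem stmt9 (m n : ℕ) (hm : 1 ≤ m) (hmn : m ≤ n) (heven : Even (m + n))
    (c : ℤ) (hc : 2 * c = (n : ℤ) - (m : ℤ))
    (Y : Finset (ℕ × ℕ)) (hY : Reach m (n + 1) Y) :
    dk Y c = dk Y (c + 1) :=
  stmt9_general m n hmn c hc Y hY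
end

section
/- Consider MHRG(1,n) for n ∈ ℕ. Then T(Y_{1,n}) = F(Y_{1,n}) if n is odd, and T(Y_{1,n}) = F(Y_{1,n}) ∖ {(n/2)} if n is even. Moreover, for 0 ≤ l ≤ n with (l) ∈ T(Y_{1,n}), the Grundy value is G((l)) = l if n is odd; if n is even, G((l)) = l for l < n/2 and G((l)) = l−1 for l > n/2. In particular, G((n)) = n if n is odd and G((n)) = n−1 if n is even. -/
open Finset

/-!
The hook of the box `(1, j)` of the row `(l)` consists of the boxes `j, …, l`, numbered
`min t (n + 1 - t)`. Comparing sizes and minima, a hook of the remaining row `(j - 1)` carries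
the same multiset of numbers only if it is the mirror image `n + 1 - l, …, n + 1 - j` of the
removed hook, which fits into `(j - 1)` exactly when `j = n / 2 + 1`; the forced second removal
then leaves `(n - l)`. Hence the options of `(l)` are the rows `(k)` with `k < l` and `2 k ≠ n`.
This describes the reachable positions at once, and by induction the Grundy value of `(l)` is the
number of such `k`, i.e. `l`, minus one once `l` has passed the missing row `(n / 2)`.
-/

lemma mem_rect_one {l : ℕ} {p : ℕ × ℕ} : p ∈ rect 1 l ↔ p.1 = 1 ∧ 1 ≤ p.2 ∧ p.2 ≤ l := by
  rw [rect, mem_product, mem_Icc, mem_Icc]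
  omega

lemma card_rect (m n : ℕ) : (rect m n).card = m * n := by
  simp [rect]

lemma rect_one_injective : Function.Injective (rect 1) := fun a b h => by
  simpa [card_rect] using congrArg Finset.card h

lemma rect_mono {m k n : ℕ} (h : k ≤ n) : rect m k ⊆ rect m n :=
  product_subset_product_right (Icc_subset_Icc_right h)

lemma isYD_rect (m n : ℕ) : IsYD (rect m n) := by
  refine ⟨fun p hp => ?_, fun p hp q hq1 hq2 hqp1 hqp2 => ?_⟩ <;>
    simp only [rect, mem_product, mem_Icc] at hp ⊢ <;> omega

lemma eq_rect_one_of_isYD {n : ℕ} {Y : Finset (ℕ × ℕ)} (hY : IsYD Y) (hsub : Y ⊆ rect 1 n) :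
    Y = rect 1 (Y.sup Prod.snd) := by
  ext p
  rw [mem_rect_one]
  constructor
  · intro hp
    obtain ⟨h1, h2, -⟩ := mem_rect_one.mp (hsub hp)
    exact ⟨h1, h2, le_sup (f := Prod.snd) hp⟩
  · rintro ⟨h1, h2, h3⟩
    obtain ⟨q, hq, hpq⟩ := (Finset.le_sup_iff (Nat.bot_eq_zero ▸ h2)).mp h3
    have hq1 := (mem_rect_one.mp (hsub hq)).1
    exact hY.2 q hq p (by omega) h2 (by omega) hpq

lemma isYD_subset_rect_one_iff {n : ℕ} {Y : Finset (ℕ × ℕ)} :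
    IsYD Y ∧ Y ⊆ rect 1 n ↔ ∃ k ≤ n, Y = rect 1 k := by
  constructor
  · rintro ⟨hY, hsub⟩
    refine ⟨Y.sup Prod.snd, Finset.sup_le fun p hp => ?_, eq_rect_one_of_isYD hY hsub⟩
    exact (mem_rect_one.mp (hsub hp)).2.2
  · rintro ⟨k, hk, rfl⟩
    exact ⟨isYD_rect 1 k, rect_mono hk⟩

lemma mex_Iio (t : ℕ) : mex (Set.Iio t) = t :=
  le_antisymm (Nat.sInf_le (by simp)) (le_csInf ⟨t, by simp⟩ fun b hb => by simpa using hb)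

lemma hook_rect_one {l j : ℕ} (hj : 1 ≤ j) :
    hook (rect 1 l) 1 j = (Icc j l).map (Function.Embedding.sectR 1 ℕ) := by
  ext p
  simp only [hook, mem_filter, mem_rect_one, mem_map, mem_Icc, Function.Embedding.sectR_apply]
  constructor
  · rintro ⟨⟨hp1, -, hp2⟩, h⟩
    exact ⟨p.2, by omega, by rw [← hp1]⟩
  · rintro ⟨t, ht, rfl⟩
    exact ⟨⟨rfl, by omega, ht.2⟩, Or.inl ⟨rfl, ht.1⟩⟩

lemma removeHook_rect_one {l j : ℕ} (hj : j ≤ l) : removeHook (rect 1 l) 1 j = rect 1 (j - 1) := by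
  ext p
  simp only [removeHook, hook, mem_image, mem_sdiff, mem_filter, mem_rect_one, shiftBox]
  constructor
  · rintro ⟨q, ⟨⟨hq1, hq2, hql⟩, hq⟩, rfl⟩
    rw [if_neg (by omega)]
    omega
  · rintro ⟨hp1, hp2, hp3⟩
    exact ⟨p, ⟨⟨hp1, hp2, by omega⟩, by omega⟩, by rw [if_neg (by omega)]⟩

lemma unimodal_one_one (n t : ℕ) : unimodal 1 n (1, t) = min (t : ℤ) (n + 1 - t) := by
  simp only [unimodal]
  push_cast
  congr 1 <;> ring

lemma Amul_hook_rect_one {n l j : ℕ} (hj : 1 ≤ j) :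
    Amul 1 n (hook (rect 1 l) 1 j) = (Icc j l).val.map fun t : ℕ => unimodal 1 n (1, t) := by
  rw [Amul, hook_rect_one hj, map_val, Multiset.map_map]
  rfl

/-- On the row, `unimodal 1 n (1, t) = min t (n + 1 - t)` is invariant under `t ↦ n + 1 - t`. -/
lemma map_Icc_reflect {n c d : ℕ} (hc : 1 ≤ c) (hd : d ≤ n) :
    (Icc (n + 1 - d) (n + 1 - c)).val.map (fun t : ℕ => unimodal 1 n (1, t)) =
      (Icc c d).val.map fun t : ℕ => unimodal 1 n (1, t) := by
  refine Multiset.map_eq_map_of_bij_of_nodup _ _ (Icc _ _).nodup (Icc _ _).nodup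
    (fun t _ => n + 1 - t) (fun t ht => ?_) (fun t ht s hs h => ?_) (fun s hs => ?_)
    (fun t ht => ?_)
  all_goals simp only [Finset.mem_val, mem_Icc] at *
  · omega
  · omega
  · exact ⟨n + 1 - s, by omega, by omega⟩
  · simp only [unimodal_one_one]
    omega

lemma min_mem_map_Icc {n a b : ℕ} (hab : a ≤ b) :
    min (a : ℤ) (n + 1 - b) ∈ (Icc a b).val.map fun t : ℕ => unimodal 1 n (1, t) := by
  rcases le_total (a : ℤ) (n + 1 - b) with h | h
  · exact Multiset.mem_map.mpr ⟨a, mem_Icc.mpr ⟨le_rfl, hab⟩, by rw [unimodal_one_one]; omega⟩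
  · exact Multiset.mem_map.mpr ⟨b, mem_Icc.mpr ⟨hab, le_rfl⟩, by rw [unimodal_one_one]; omega⟩

lemma min_le_of_mem_map_Icc {n a b : ℕ} {y : ℤ}
    (hy : y ∈ (Icc a b).val.map fun t : ℕ => unimodal 1 n (1, t)) :
    min (a : ℤ) (n + 1 - b) ≤ y := by
  obtain ⟨t, ht, rfl⟩ := Multiset.mem_map.mp hy
  have := mem_Icc.mp (mem_val.mp ht)
  rw [unimodal_one_one]
  omega

/-- Equal multisets have the same size and the same minimum, which pins the second interval
down to the first one or its reflection. -/
lemma eq_or_reflect_of_map_Icc_eq {n a b c d : ℕ} (hab : a ≤ b) (hcd : c ≤ d)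
    (h : (Icc a b).val.map (fun t : ℕ => unimodal 1 n (1, t)) =
      (Icc c d).val.map fun t : ℕ => unimodal 1 n (1, t)) :
    (a = c ∧ b = d) ∨ (a + d = n + 1 ∧ b + c = n + 1) := by
  have hcard : b + 1 - a = d + 1 - c := by
    simpa using congrArg Multiset.card h
  have h1 := min_le_of_mem_map_Icc (h ▸ min_mem_map_Icc (n := n) hab)
  have h2 := min_le_of_mem_map_Icc (h.symm ▸ min_mem_map_Icc (n := n) hcd)
  omega

/-- The only candidate for the forced second hook is the mirror image of the removed one. -/
lemma Amul_hook_eq_iff {n l j i' j' : ℕ} (hl : l ≤ n) (hj : 1 ≤ j) (hjl : j ≤ l) :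
    ((i', j') ∈ rect 1 (j - 1) ∧
      Amul 1 n (hook (rect 1 (j - 1)) i' j') = Amul 1 n (hook (rect 1 l) 1 j)) ↔
      2 * j = n + 2 ∧ i' = 1 ∧ j' = n + 1 - l := by
  constructor
  · rintro ⟨hmem, heq⟩
    obtain ⟨rfl, hj'1, hj'2⟩ := mem_rect_one.mp hmem
    rw [Amul_hook_rect_one hj'1, Amul_hook_rect_one hj] at heq
    have := eq_or_reflect_of_map_Icc_eq hj'2 hjl heq
    omega
  · rintro ⟨htr, rfl, rfl⟩
    refine ⟨mem_rect_one.mpr ⟨rfl, by omega, by omega⟩, ?_⟩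
    rw [Amul_hook_rect_one (by omega), Amul_hook_rect_one hj, show j - 1 = n + 1 - j by omega]
    exact map_Icc_reflect hj hl

lemma move_rect_one_iff {n l : ℕ} (hl : l ≤ n) {Y' : Finset (ℕ × ℕ)} :
    Move 1 n (rect 1 l) Y' ↔ ∃ k < l, 2 * k ≠ n ∧ Y' = rect 1 k := by
  constructor
  · rintro ⟨i, j, hij, hc⟩
    obtain ⟨rfl, hj, hjl⟩ := mem_rect_one.mp hij
    rw [removeHook_rect_one hjl] at hc
    rcases hc with ⟨rfl, hno⟩ | ⟨i', j', hmem, heq, rfl⟩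
    · have htr : 2 * j ≠ n + 2 := fun htr =>
        hno ⟨1, n + 1 - l, (Amul_hook_eq_iff hl hj hjl).mpr ⟨htr, rfl, rfl⟩⟩
      exact ⟨j - 1, by omega, by omega, rfl⟩
    · obtain ⟨htr, rfl, rfl⟩ := (Amul_hook_eq_iff hl hj hjl).mp ⟨hmem, heq⟩
      refine ⟨n - l, by omega, by omega, ?_⟩
      rw [removeHook_rect_one (by omega), show n + 1 - l - 1 = n - l by omega]
  · rintro ⟨k, hkl, hkn, rfl⟩
    refine ⟨1, k + 1, mem_rect_one.mpr ⟨rfl, by omega, hkl⟩, Or.inl ⟨?_, ?_⟩⟩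
    · rw [removeHook_rect_one hkl, Nat.succ_sub_one]
    · rintro ⟨i', j', h⟩
      rw [removeHook_rect_one hkl] at h
      have := (Amul_hook_eq_iff hl (by omega) hkl).mp h
      omega

lemma grundy_rect_one {n l : ℕ} (hl : l ≤ n) :
    grundy 1 n (rect 1 l) = if n % 2 = 0 ∧ n < 2 * l then l - 1 else l := by
  induction l using Nat.strong_induction_on with
  | _ l ih =>
  have hopt : {g : ℕ | ∃ Y', ∃ _ : Move 1 n (rect 1 l) Y', grundy 1 n Y' = g} =
      {g | ∃ k < l, 2 * k ≠ n ∧ (if n % 2 = 0 ∧ n < 2 * k then k - 1 else k) = g} := by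
    ext g
    simp only [Set.mem_ofPred_eq, move_rect_one_iff hl, exists_prop]
    constructor
    · rintro ⟨_, ⟨k, hkl, hkn, rfl⟩, rfl⟩
      exact ⟨k, hkl, hkn, (ih k hkl (by omega)).symm⟩
    · rintro ⟨k, hkl, hkn, rfl⟩
      exact ⟨_, ⟨k, hkl, hkn, rfl⟩, ih k hkl (by omega)⟩
  rw [grundy, hopt, ← mex_Iio (if n % 2 = 0 ∧ n < 2 * l then l - 1 else l)]
  congr 1
  ext g
  simp only [Set.mem_ofPred_eq, Set.mem_Iio]
  constructor
  · rintro ⟨k, hkl, hkn, rfl⟩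
    split_ifs <;> omega
  · intro hg
    -- the row `(n / 2)` is not an option, so larger values come from one row further up
    refine ⟨if n % 2 = 0 ∧ n ≤ 2 * g then g + 1 else g, ?_, ?_, ?_⟩ <;> split_ifs at * <;> omega

lemma reach_one_iff {n : ℕ} (hn : 1 ≤ n) {Y : Finset (ℕ × ℕ)} :
    Reach 1 n Y ↔ ∃ k ≤ n, 2 * k ≠ n ∧ Y = rect 1 k := by
  constructor
  · intro h
    induction h with
    | refl => exact ⟨n, le_rfl, by omega, rfl⟩
    | tail _ hmove ih =>
      obtain ⟨k, hk, -, rfl⟩ := ih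
      obtain ⟨k', hk', hk'n, rfl⟩ := (move_rect_one_iff hk).mp hmove
      exact ⟨k', by omega, hk'n, rfl⟩
  · rintro ⟨k, hk, hkn, rfl⟩
    rcases hk.eq_or_lt with rfl | hlt
    · exact Relation.ReflTransGen.refl
    · exact .single ((move_rect_one_iff le_rfl).mpr ⟨k, hlt, hkn, rfl⟩)

theorem stmt11 (n : ℕ) (hn : 1 ≤ n) :
    (Odd n → {Y : Finset (ℕ × ℕ) | Reach 1 n Y} = {Y | IsYD Y ∧ Y ⊆ rect 1 n}) ∧
    (Even n → {Y : Finset (ℕ × ℕ) | Reach 1 n Y} =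
        {Y | IsYD Y ∧ Y ⊆ rect 1 n} \ {rect 1 (n / 2)}) ∧
    (∀ l : ℕ, l ≤ n → Reach 1 n (rect 1 l) →
      (Odd n → grundy 1 n (rect 1 l) = l) ∧
      (Even n → l < n / 2 → grundy 1 n (rect 1 l) = l) ∧
      (Even n → n / 2 < l → grundy 1 n (rect 1 l) = l - 1)) ∧
    (Odd n → grundy 1 n (rect 1 n) = n) ∧
    (Even n → grundy 1 n (rect 1 n) = n - 1) := by
  simp only [Nat.odd_iff, Nat.even_iff]
  refine ⟨fun hodd => ?_, fun heven => ?_, fun l hl _ => ?_, fun hodd => ?_, fun heven => ?_⟩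
  · ext Y
    simp only [Set.mem_ofPred_eq, reach_one_iff hn, isYD_subset_rect_one_iff]
    exact exists_congr fun k =>
      ⟨fun ⟨hk, _, hY⟩ => ⟨hk, hY⟩, fun ⟨hk, hY⟩ => ⟨hk, by omega, hY⟩⟩
  · ext Y
    simp only [Set.mem_ofPred_eq, Set.mem_sdiff, Set.mem_singleton_iff, reach_one_iff hn,
      isYD_subset_rect_one_iff]
    constructor
    · rintro ⟨k, hk, hkn, rfl⟩
      exact ⟨⟨k, hk, rfl⟩, fun h => hkn (by rw [rect_one_injective h]; omega)⟩
    · rintro ⟨⟨k, hk, rfl⟩, hne⟩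
      exact ⟨k, hk, fun hkn => hne (congrArg _ (by omega)), rfl⟩
  · rw [grundy_rect_one hl]
    refine ⟨fun _ => ?_, fun _ _ => ?_, fun _ _ => ?_⟩ <;> split_ifs <;> omega
  · rw [grundy_rect_one le_rfl, if_neg (by omega)]
  · rw [grundy_rect_one le_rfl, if_pos (by omega)]
end

section
/- Let n = 2n' be even, let Y = (λ₁,λ₂) be a Young diagram contained in Y_{2,2n'}, let (i,j) ∈ Y, and set Y' = (λ₁',λ₂') = Y∖h_Y(i,j). Then λ₁' + λ₂' = 2n' if and only if there exists a box (i',j') ∈ Y' such that A(h_{Y'}(i',j')) = A(h_Y(i,j)) as multisets. In this case, Y'' := Y'∖h_{Y'}(i',j') equals (2n'−λ₂, 2n'−λ₁). -/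
open Finset

/-!
In a two-row diagram inside the `2 × N` rectangle the values `j - i + 2` over a hook form an
interval `[u, v] ⊆ [1, N + 1]`, on which `α_{2,N}` is the tent `d ↦ min d (N + 2 - d)`. Hence
two hooks carry the same multiset iff their intervals coincide or are exchanged by the
reflection `d ↦ N + 2 - d`. Checking the three kinds of hooks of a two-row diagram shows that
no hook of `Y'` has the interval of the removed hook, while for `N` even the reflected interval
is a hook interval of `Y'` exactly when `|Y'| = N`; removing that hook leaves
`(N - λ₂, N - λ₁)`.
-/

lemma mem_tworow {a b x y : ℕ} :
    (x, y) ∈ tworow a b ↔ (x = 1 ∧ 1 ≤ y ∧ y ≤ a) ∨ (x = 2 ∧ 1 ≤ y ∧ y ≤ b) := by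
  simp only [tworow, mem_union, mem_product, mem_singleton, mem_Icc]

lemma tworow_inj {a b a' b' : ℕ} (h : tworow a b = tworow a' b') : a = a' ∧ b = b' := by
  have row1 := fun t => Finset.ext_iff.1 h (1, t)
  have row2 := fun t => Finset.ext_iff.1 h (2, t)
  have h12 : (1 : ℕ) ≠ 2 := by decide
  simp only [mem_tworow, true_and, h12, h12.symm, false_and, or_false, false_or] at row1 row2
  have := row1 a; have := row1 a'; have := row2 b; have := row2 b'
  omega

/-- `tent N (j - i + 2)` is the unimodal number `α_{2,N}(i, j)`. -/
def tent (N d : ℕ) : ℤ := min (d : ℤ) ((N : ℤ) + 2 - d)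

def tentMultiset (N u v : ℕ) : Multiset ℤ := (Icc u v).val.map (tent N)

lemma unimodal_two_eq_tent (N : ℕ) {p : ℕ × ℕ} (hp : p.1 ≤ 2) :
    unimodal 2 N p = tent N (p.2 + 2 - p.1) := by
  unfold unimodal tent
  push_cast [show p.1 ≤ p.2 + 2 by omega]
  omega

lemma card_tentMultiset (N u v : ℕ) : Multiset.card (tentMultiset N u v) = v + 1 - u := by
  rw [tentMultiset, Multiset.card_map, ← card_def, Nat.card_Icc]

lemma min_le_of_mem_tentMultiset {N u v : ℕ} {x : ℤ}
    (hx : x ∈ tentMultiset N u v) : min (u : ℤ) ((N : ℤ) + 2 - v) ≤ x := by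
  obtain ⟨t, ht, rfl⟩ := Multiset.mem_map.1 hx
  rw [← mem_def, mem_Icc] at ht
  unfold tent
  omega

lemma min_mem_tentMultiset {N u v : ℕ} (huv : u ≤ v) :
    min (u : ℤ) ((N : ℤ) + 2 - v) ∈ tentMultiset N u v := by
  by_cases h : u + v ≤ N + 2
  · refine Multiset.mem_map.2 ⟨u, mem_Icc.2 ⟨le_rfl, huv⟩, ?_⟩
    unfold tent; omega
  · refine Multiset.mem_map.2 ⟨v, mem_Icc.2 ⟨huv, le_rfl⟩, ?_⟩
    unfold tent; omega

lemma tentMultiset_reflect {N u v : ℕ} (hv : v ≤ N + 1) :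
    tentMultiset N (N + 2 - v) (N + 2 - u) = tentMultiset N u v := by
  have hinj : Set.InjOn (fun t => N + 2 - t) (Icc u v : Set ℕ) := by
    intro x hx y hy hxy
    simp only [coe_Icc, Set.mem_Icc] at hx hy
    simp only at hxy
    omega
  have himage : (Icc u v).image (fun t => N + 2 - t) = Icc (N + 2 - v) (N + 2 - u) := by
    ext x
    simp only [mem_image, mem_Icc]
    refine ⟨by rintro ⟨t, ht, rfl⟩; omega, fun hx => ⟨N + 2 - x, by omega, by omega⟩⟩
  rw [tentMultiset, ← himage, image_val_of_injOn hinj, Multiset.map_map, tentMultiset]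
  refine Multiset.map_congr rfl fun t ht => ?_
  rw [← mem_def, mem_Icc] at ht
  simp only [Function.comp, tent]
  push_cast [show t ≤ N + 2 by omega]
  omega

/-- A tent multiset over an interval is determined by its size and its least element, and the
tent is symmetric under `d ↦ N + 2 - d`. -/
lemma tentMultiset_eq_iff {N u v u' v' : ℕ} (huv : u ≤ v) (hv : v ≤ N + 1)
    (huv' : u' ≤ v') (hv' : v' ≤ N + 1) :
    tentMultiset N u' v' = tentMultiset N u v ↔
      (u' = u ∧ v' = v) ∨ (u' = N + 2 - v ∧ v' = N + 2 - u) := by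
  constructor
  · intro he
    have hcard := congrArg Multiset.card he
    rw [card_tentMultiset, card_tentMultiset] at hcard
    have hmin := min_le_of_mem_tentMultiset (he ▸ min_mem_tentMultiset huv')
    have hmin' := min_le_of_mem_tentMultiset (he ▸ min_mem_tentMultiset huv)
    omega
  · rintro (⟨rfl, rfl⟩ | ⟨rfl, rfl⟩)
    · rfl
    · exact tentMultiset_reflect hv

lemma removeHook_eq_sdiff {Y : Finset (ℕ × ℕ)} {i j : ℕ}
    (h : ∀ p ∈ Y \ hook Y i j, ¬(i < p.1 ∧ j < p.2)) : removeHook Y i j = Y \ hook Y i j := by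
  rw [removeHook]
  conv_rhs => rw [← image_id (s := Y \ hook Y i j)]
  exact image_congr fun p hp => if_neg (h p hp)

/-- The three kinds of boxes `(i, j)` of the two-row diagram `(a, b)`: `[u, v]` is the range
of `j - i + 2` over the hook of `(i, j)`, and `(a', b')` is the diagram left after removing
that hook. -/
def TworowHook (a b i j u v a' b' : ℕ) : Prop :=
  (i = 2 ∧ 1 ≤ j ∧ j ≤ b ∧ u = j ∧ v = b ∧ a' = a ∧ b' = j - 1) ∨
  (i = 1 ∧ b < j ∧ j ≤ a ∧ u = j + 1 ∧ v = a + 1 ∧ a' = j - 1 ∧ b' = b) ∨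
  (i = 1 ∧ 1 ≤ j ∧ j ≤ b ∧ u = j ∧ v = a + 1 ∧ a' = b - 1 ∧ b' = j - 1)

lemma exists_tworowHook {a b i j : ℕ} (h : (i, j) ∈ tworow a b) :
    ∃ u v a' b', TworowHook a b i j u v a' b' := by
  unfold TworowHook
  rcases mem_tworow.1 h with ⟨rfl, hj, hja⟩ | ⟨rfl, hj, hjb⟩
  · by_cases hjb : j ≤ b
    · exact ⟨_, _, _, _, Or.inr (Or.inr ⟨rfl, hj, hjb, rfl, rfl, rfl, rfl⟩)⟩
    · exact ⟨_, _, _, _, Or.inr (Or.inl ⟨rfl, by omega, hja, rfl, rfl, rfl, rfl⟩)⟩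
  · exact ⟨_, _, _, _, Or.inl ⟨rfl, hj, hjb, rfl, rfl, rfl, rfl⟩⟩

namespace TworowHook

variable {a b i j u v a' b' : ℕ}

lemma mem (hba : b ≤ a) (h : TworowHook a b i j u v a' b') : (i, j) ∈ tworow a b := by
  unfold TworowHook at h
  rw [mem_tworow]
  omega

lemma bounds (hba : b ≤ a) (h : TworowHook a b i j u v a' b') : 1 ≤ u ∧ u ≤ v ∧ v ≤ a + 1 := by
  unfold TworowHook at h
  omega

lemma shape_le (hba : b ≤ a) (h : TworowHook a b i j u v a' b') : b' ≤ a' ∧ a' ≤ a := by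
  unfold TworowHook at h
  omega

lemma Amul_hook (N : ℕ) (hba : b ≤ a) (h : TworowHook a b i j u v a' b') :
    Amul 2 N (hook (tworow a b) i j) = tentMultiset N u v := by
  have hmem : ∀ x y, (x, y) ∈ hook (tworow a b) i j ↔
      ((x = 1 ∧ 1 ≤ y ∧ y ≤ a) ∨ (x = 2 ∧ 1 ≤ y ∧ y ≤ b)) ∧
        ((x = i ∧ j ≤ y) ∨ (y = j ∧ i ≤ x)) := fun x y => by
    simp only [hook, mem_filter, mem_tworow]
  have hrow : ∀ p ∈ hook (tworow a b) i j, p.1 ≤ 2 := fun ⟨x, y⟩ hp => by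
    rw [hmem] at hp; dsimp only; omega
  have hinj : Set.InjOn (fun p : ℕ × ℕ => p.2 + 2 - p.1) (hook (tworow a b) i j : Set _) := by
    rintro ⟨x, y⟩ hp ⟨x', y'⟩ hp' hxy
    rw [mem_coe, hmem] at hp hp'
    simp only at hxy
    unfold TworowHook at h
    ext <;> dsimp only <;> omega
  have himage : (hook (tworow a b) i j).image (fun p => p.2 + 2 - p.1) = Icc u v := by
    ext d
    simp only [mem_image, Prod.exists, hmem, mem_Icc]
    unfold TworowHook at h
    refine ⟨by rintro ⟨x, y, hxy, rfl⟩; omega, fun hd => ?_⟩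
    rcases h with h | h | h
    · exact ⟨2, d, by omega, by omega⟩
    · exact ⟨1, d - 1, by omega, by omega⟩
    · by_cases hd' : d = j
      · exact ⟨2, d, by omega, by omega⟩
      · exact ⟨1, d - 1, by omega, by omega⟩
  rw [Amul, tentMultiset, ← himage, image_val_of_injOn hinj, Multiset.map_map]
  exact Multiset.map_congr rfl fun p hp => unimodal_two_eq_tent N (hrow p hp)

lemma removeHook_tworow (hba : b ≤ a) (h : TworowHook a b i j u v a' b') :
    removeHook (tworow a b) i j = tworow a' b' := by
  have hmem : ∀ x y, (x, y) ∈ tworow a b \ hook (tworow a b) i j ↔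
      ((x = 1 ∧ 1 ≤ y ∧ y ≤ a) ∨ (x = 2 ∧ 1 ≤ y ∧ y ≤ b)) ∧
        ¬((x = i ∧ j ≤ y) ∨ (y = j ∧ i ≤ x)) := fun x y => by
    simp only [mem_sdiff, hook, mem_filter, mem_tworow, not_and, and_congr_right_iff]
    tauto
  unfold TworowHook at h
  rcases or_assoc.2 h with h | ⟨rfl, hj, hjb, -, -, rfl, rfl⟩
  · rw [removeHook_eq_sdiff fun ⟨x, y⟩ hp => by rw [hmem] at hp; omega]
    ext ⟨x, y⟩
    rw [hmem, mem_tworow]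
    omega
  -- the second row right of column `j` slides up into the first row
  ext ⟨x, y⟩
  simp only [removeHook, mem_image, Prod.exists, hmem, mem_tworow]
  constructor
  · rintro ⟨x', y', hp, he⟩
    unfold shiftBox at he
    split_ifs at he <;> simp only [Prod.mk.injEq] at he <;> omega
  · intro hq
    by_cases hslide : x = 1 ∧ j ≤ y
    · refine ⟨2, y + 1, by omega, ?_⟩
      simp only [shiftBox, if_pos (show 1 < 2 ∧ j < y + 1 by omega), Prod.mk.injEq]
      omega
    · refine ⟨x, y, by omega, ?_⟩
      rw [shiftBox, if_neg (by omega)]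

/-- The evenness of `N` matters: for odd `N` the reflected interval can be a hook interval
of `(a', b')` although `a' + b' ≠ N`. -/
lemma reflect {N i' j' u' v' a'' b'' : ℕ} (hN : Even N) (hba : b ≤ a)
    (h : TworowHook a b i j u v a' b') (h' : TworowHook a' b' i' j' u' v' a'' b'')
    (huv : (u' = u ∧ v' = v) ∨ (u' = N + 2 - v ∧ v' = N + 2 - u)) :
    a' + b' = N ∧ a'' = N - b ∧ b'' = N - a := by
  obtain ⟨n, rfl⟩ := hN
  unfold TworowHook at h h'
  rcases h with h | h | h <;> rcases h' with h' | h' | h' <;> omega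

lemma exists_reflect {N : ℕ} (hba : b ≤ a) (ha : a ≤ N) (h : TworowHook a b i j u v a' b')
    (hsum : a' + b' = N) :
    ∃ i' j' a'' b'', TworowHook a' b' i' j' (N + 2 - v) (N + 2 - u) a'' b'' := by
  unfold TworowHook at h ⊢
  rcases h with h | h | h
  · exact ⟨1, N + 1 - b, N - b, j - 1, Or.inr (Or.inl (by omega))⟩
  · exact ⟨2, N + 1 - a, j - 1, N - a, Or.inl (by omega)⟩
  · exact ⟨1, N + 1 - a, N - b, N - a, Or.inr (Or.inr (by omega))⟩

end TworowHook

theorem stmt12_general (n' : ℕ) (l1 l2 : ℕ) (h21 : l2 ≤ l1) (h1 : l1 ≤ 2 * n')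
    (i j : ℕ) (hij : (i, j) ∈ tworow l1 l2)
    (l1' l2' : ℕ)
    (hY' : removeHook (tworow l1 l2) i j = tworow l1' l2') :
    ((l1' + l2' = 2 * n') ↔
      ∃ i' j' : ℕ, (i', j') ∈ tworow l1' l2' ∧
        Amul 2 (2 * n') (hook (tworow l1' l2') i' j') =
          Amul 2 (2 * n') (hook (tworow l1 l2) i j)) ∧
    (∀ i' j' : ℕ, (i', j') ∈ tworow l1' l2' →
      Amul 2 (2 * n') (hook (tworow l1' l2') i' j') =
        Amul 2 (2 * n') (hook (tworow l1 l2) i j) →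
      removeHook (tworow l1' l2') i' j' = tworow (2 * n' - l2) (2 * n' - l1)) := by
  obtain ⟨u, v, a', b', h⟩ := exists_tworowHook hij
  obtain ⟨rfl, rfl⟩ := tworow_inj (hY'.symm.trans (h.removeHook_tworow h21))
  obtain ⟨hba', ha'⟩ := h.shape_le h21
  obtain ⟨-, huv, hv⟩ := h.bounds h21
  rw [h.Amul_hook _ h21]
  have hmatch : ∀ i' j', (i', j') ∈ tworow l1' l2' →
      Amul 2 (2 * n') (hook (tworow l1' l2') i' j') = tentMultiset (2 * n') u v →
      l1' + l2' = 2 * n' ∧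
        removeHook (tworow l1' l2') i' j' = tworow (2 * n' - l2) (2 * n' - l1) := by
    intro i' j' hmem hA
    obtain ⟨u', v', a'', b'', h'⟩ := exists_tworowHook hmem
    obtain ⟨-, huv', hv'⟩ := h'.bounds hba'
    rw [h'.Amul_hook _ hba', tentMultiset_eq_iff huv (by omega) huv' (by omega)] at hA
    obtain ⟨hsum, rfl, rfl⟩ := h.reflect (even_two_mul n') h21 h' hA
    exact ⟨hsum, h'.removeHook_tworow hba'⟩
  refine ⟨⟨fun hsum => ?_, fun ⟨i', j', hmem, hA⟩ => (hmatch i' j' hmem hA).1⟩,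
    fun i' j' hmem hA => (hmatch i' j' hmem hA).2⟩
  obtain ⟨i', j', a'', b'', h'⟩ := h.exists_reflect h21 h1 hsum
  exact ⟨i', j', h'.mem hba', by rw [h'.Amul_hook _ hba', tentMultiset_reflect (by omega)]⟩

theorem stmt12 (n' : ℕ) (hn' : 1 ≤ n') (l1 l2 : ℕ) (h21 : l2 ≤ l1) (h1 : l1 ≤ 2 * n')
    (i j : ℕ) (hij : (i, j) ∈ tworow l1 l2)
    (l1' l2' : ℕ) (h21' : l2' ≤ l1')
    (hY' : removeHook (tworow l1 l2) i j = tworow l1' l2') :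
    ((l1' + l2' = 2 * n') ↔
      ∃ i' j' : ℕ, (i', j') ∈ tworow l1' l2' ∧
        Amul 2 (2 * n') (hook (tworow l1' l2') i' j') =
          Amul 2 (2 * n') (hook (tworow l1 l2) i j)) ∧
    (∀ i' j' : ℕ, (i', j') ∈ tworow l1' l2' →
      Amul 2 (2 * n') (hook (tworow l1' l2') i' j') =
        Amul 2 (2 * n') (hook (tworow l1 l2) i j) →
      removeHook (tworow l1' l2') i' j' = tworow (2 * n' - l2) (2 * n' - l1)) :=
  stmt12_general n' l1 l2 h21 h1 i j hij l1' l2' hY'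
end
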